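/- arXiv:math/0301037 — 7 statements merged into one kernel-verified Lean document; each statement's English description precedes it below -/
import Mathlib

section
/- (Sign change lemma) If p(z) = Σ_{j=0}^n a_j z^j is a real polynomial and (z+1)p(z) = Σ_{j=0}^{n+1} b_j z^j, then the number of sign changes in the coefficient sequence (b_0, …, b_{n+1}) is at most the number of sign changes in (a_0, …, a_n). -/
open Polynomial

/-- The number of sign changes of a finite sequence of reals: zeros are discarded,
and we count adjacent pairs of opposite sign in the remaining sequence. -/
noncomputable def signChanges (l : List ℝ) : ℕ :=
  let l' := l.filter (fun x => decide (x ≠ 0))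
  (l'.zip l'.tail).countP (fun p => decide (p.1 * p.2 < 0))

/-- The number of sign changes of the coefficient sequence of a real polynomial. -/
noncomputable def coeffSignChanges (p : Polynomial ℝ) : ℕ :=
  signChanges ((List.range (p.natDegree + 1)).map p.coeff)

/-!
Write `b_j = a_{j-1} + a_j` for the coefficients of `(X + 1) p`. Scanning both sequences from
left to right, the sign changes of `b` seen so far never exceed those of `a`, plus one exactly
when the last nonzero `b` and the last nonzero `a` have opposite signs. A nonzero `b_j` that
disagrees in sign with the last nonzero `b` has the sign of `a_{j-1}` or of `a_j`, so it either
meets a sign change of `a` or uses up that slack.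
-/

lemma signChanges_singleton (x : ℝ) : signChanges [x] = 0 := by
  by_cases hx : x = 0 <;> simp [signChanges, hx]

lemma signChanges_cons_zero (l : List ℝ) : signChanges (0 :: l) = signChanges l := by
  simp [signChanges]

lemma signChanges_cons_cons_zero (x : ℝ) (l : List ℝ) :
    signChanges (x :: 0 :: l) = signChanges (x :: l) := by
  have h : (x :: 0 :: l).filter (fun x => decide (x ≠ 0)) =
      (x :: l).filter (fun x => decide (x ≠ 0)) := by
    simp [List.filter_cons]
  simp only [signChanges, h]

lemma signChanges_cons_cons_of_ne_zero (x : ℝ) {y : ℝ} (hy : y ≠ 0) (l : List ℝ) :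
    signChanges (x :: y :: l) = (if x * y < 0 then 1 else 0) + signChanges (y :: l) := by
  rcases eq_or_ne x 0 with rfl | hx
  · simp [signChanges]
  · simp [signChanges, hx, hy, List.countP_cons]
    omega

lemma ite_mul_neg_le_add {a b c : ℝ} (hb : b ≠ 0) :
    (if a * c < 0 then 1 else 0) ≤
      (if a * b < 0 then 1 else 0) + (if b * c < 0 then 1 else 0) := by
  split_ifs <;> nlinarith [mul_self_pos.2 hb]

lemma ite_mul_neg_add_le {s t c y : ℝ} (ht : t ≠ 0) (hct : 0 ≤ c * t) (hz : c + y ≠ 0) :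
    (if s * (c + y) < 0 then 1 else 0) + (if (c + y) * y < 0 then 1 else 0) ≤
      (if s * t < 0 then 1 else 0) + (if t * y < 0 then 1 else 0) := by
  split_ifs <;> nlinarith [mul_self_pos.2 hz, mul_self_pos.2 ht]

/-- For `c = 0` and `l` the coefficient list of `p`, this is the coefficient list of
`(X + 1) * p`. -/
def shiftAdd (c : ℝ) (l : List ℝ) : List ℝ :=
  List.zipWith (· + ·) (c :: l) (l ++ [0])

@[simp] lemma shiftAdd_nil (c : ℝ) : shiftAdd c [] = [c] := by simp [shiftAdd]

@[simp] lemma shiftAdd_cons (c y : ℝ) (l : List ℝ) :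
    shiftAdd c (y :: l) = (c + y) :: shiftAdd y l := by simp [shiftAdd]

/-- The invariant of the scan: `s` is the last nonzero entry of the sums, `t` the last nonzero
entry of the original sequence and `c` the entry just before `l`, which is zero or of the sign
of `t`. -/
theorem signChanges_cons_shiftAdd_le (l : List ℝ) {s t c : ℝ} (ht : t ≠ 0) (hct : 0 ≤ c * t) :
    signChanges (s :: shiftAdd c l) ≤ signChanges (t :: l) + if s * t < 0 then 1 else 0 := by
  induction l generalizing s t c with
  | nil =>
    rw [shiftAdd_nil, signChanges_singleton]
    rcases eq_or_ne c 0 with rfl | hc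
    · simp [signChanges_cons_cons_zero, signChanges_singleton]
    · rw [signChanges_cons_cons_of_ne_zero s hc, signChanges_singleton]
      have := ite_mul_neg_add_le (s := s) (y := 0) ht hct (by simpa using hc)
      simp only [add_zero, mul_zero, lt_irrefl, if_false] at this
      omega
  | cons y l ih =>
    rw [shiftAdd_cons]
    rcases eq_or_ne y 0 with rfl | hy
    · rw [signChanges_cons_cons_zero, add_zero]
      rcases eq_or_ne c 0 with rfl | hc
      · rw [signChanges_cons_cons_zero]
        exact ih (c := 0) ht (by simp)
      · rw [signChanges_cons_cons_of_ne_zero _ hc]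
        have hc_step := ih (s := c) (c := 0) ht (by simp)
        rw [if_neg (not_lt.2 hct)] at hc_step
        have := ite_mul_neg_add_le (s := s) (y := 0) ht hct (by simpa using hc)
        simp only [add_zero, mul_zero, lt_irrefl, if_false] at this
        omega
    · rw [signChanges_cons_cons_of_ne_zero t hy]
      rcases eq_or_ne (c + y) 0 with hz | hz
      · rw [hz, signChanges_cons_cons_zero]
        have := ih (s := s) hy (mul_self_nonneg y)
        have := ite_mul_neg_le_add (a := s) (c := y) ht
        omega
      · rw [signChanges_cons_cons_of_ne_zero s hz]
        have := ih (s := c + y) hy (mul_self_nonneg y)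
        have := ite_mul_neg_add_le (s := s) ht hct hz
        omega

theorem signChanges_shiftAdd_zero_le (l : List ℝ) :
    signChanges (shiftAdd 0 l) ≤ signChanges l := by
  induction l with
  | nil => simp [signChanges]
  | cons y l ih =>
    rw [shiftAdd_cons, zero_add]
    rcases eq_or_ne y 0 with rfl | hy
    · simpa only [signChanges_cons_zero] using ih
    · simpa [not_lt.2 (mul_self_nonneg y)] using
        signChanges_cons_shiftAdd_le l (s := y) hy (mul_self_nonneg y)

lemma range_map_coeff_X_mul (p : ℝ[X]) (n : ℕ) :
    (List.range (n + 1)).map (X * p).coeff = 0 :: (List.range n).map p.coeff := by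
  simp [List.range_succ_eq_map, Function.comp_def, coeff_X_mul]

lemma range_map_coeff_succ_of_natDegree_lt {p : ℝ[X]} {n : ℕ} (h : p.natDegree < n) :
    (List.range (n + 1)).map p.coeff = (List.range n).map p.coeff ++ [0] := by
  simp [List.range_succ, coeff_eq_zero_of_natDegree_lt h]

lemma range_map_coeff_add (p q : ℝ[X]) (n : ℕ) :
    (List.range n).map (p + q).coeff =
      List.zipWith (· + ·) ((List.range n).map p.coeff) ((List.range n).map q.coeff) := by
  simp [List.zipWith_map, List.zipWith_self]

lemma range_map_coeff_X_add_one_mul {p : ℝ[X]} {n : ℕ} (h : p.natDegree ≤ n) :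
    (List.range (n + 2)).map ((X + 1) * p).coeff =
      shiftAdd 0 ((List.range (n + 1)).map p.coeff) := by
  rw [add_mul, one_mul, range_map_coeff_add, range_map_coeff_X_mul,
    range_map_coeff_succ_of_natDegree_lt (Nat.lt_succ_of_le h), shiftAdd]

lemma natDegree_X_add_one_mul {p : ℝ[X]} (hp : p ≠ 0) :
    ((X + 1) * p).natDegree = p.natDegree + 1 := by
  rw [← C_1, natDegree_mul (X_add_C_ne_zero 1) hp, natDegree_X_add_C, add_comm]

/-- Multiplying a real polynomial by `z + 1` does not increase the number of sign
changes of the coefficient sequence. -/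
theorem signChanges_mul_X_add_one (p : Polynomial ℝ) :
    coeffSignChanges ((Polynomial.X + 1) * p) ≤ coeffSignChanges p := by
  rcases eq_or_ne p 0 with rfl | hp
  · simp
  · rw [coeffSignChanges, natDegree_X_add_one_mul hp, range_map_coeff_X_add_one_mul le_rfl]
    exact signChanges_shiftAdd_zero_le _
end

section
/- (Descartes' rule of signs, upper bound) A nonzero real polynomial p has at most V positive real zeros counted with multiplicity, where V is the number of sign changes in its coefficient sequence. -/
open Polynomial

namespace Descartes

noncomputable def fsgn (l : List ℝ) : ℝ := (l.filter (fun x => decide (x ≠ 0))).headD 0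

lemma filter_cons_nz {x : ℝ} (hx : x ≠ 0) (l : List ℝ) :
    (x :: l).filter (fun x => decide (x ≠ 0)) = x :: l.filter (fun x => decide (x ≠ 0)) := by
  rw [List.filter_cons, if_pos (by simpa using hx)]

lemma filter_cons_z (l : List ℝ) :
    ((0:ℝ) :: l).filter (fun x => decide (x ≠ 0)) = l.filter (fun x => decide (x ≠ 0)) := by
  rw [List.filter_cons, if_neg (by simp)]

lemma signChanges_cons_zero (l : List ℝ) : signChanges (0 :: l) = signChanges l := by
  unfold signChanges; rw [filter_cons_z]

lemma fsgn_cons_zero (l : List ℝ) : fsgn (0 :: l) = fsgn l := by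
  unfold fsgn; rw [filter_cons_z]

lemma fsgn_cons_nz {x : ℝ} (hx : x ≠ 0) (l : List ℝ) : fsgn (x :: l) = x := by
  unfold fsgn; rw [filter_cons_nz hx]; rfl

lemma fsgn_eq_zero_iff (l : List ℝ) :
    fsgn l = 0 ↔ l.filter (fun x => decide (x ≠ 0)) = [] := by
  unfold fsgn
  rcases h : l.filter (fun x => decide (x ≠ 0)) with _ | ⟨y, t⟩
  · simp
  · have hy : y ∈ l.filter (fun x => decide (x ≠ 0)) := by rw [h]; exact List.mem_cons_self
    have : y ≠ 0 := by simpa using (List.mem_filter.mp hy).2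
    simp [this]

lemma signChanges_eq_zero (l : List ℝ) (h : l.filter (fun x => decide (x ≠ 0)) = []) :
    signChanges l = 0 := by
  unfold signChanges; rw [h]; rfl

lemma signChanges_cons {x : ℝ} (hx : x ≠ 0) (l : List ℝ) :
    signChanges (x :: l) = (if x * fsgn l < 0 then 1 else 0) + signChanges l := by
  have hf := (fsgn_eq_zero_iff l)
  unfold signChanges fsgn
  rw [filter_cons_nz hx]
  rcases h : l.filter (fun x => decide (x ≠ 0)) with _ | ⟨y, t⟩
  · simp
  · simp only [List.tail_cons, List.zip_cons_cons, List.countP_cons, List.headD_cons]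
    simp [Nat.add_comm]
    congr

lemma neg_r_mul_lt_iff (r a b : ℝ) (hr : 0 < r) : (0 - r * a) * b < 0 ↔ 0 < a * b := by
  constructor <;> intro h <;> nlinarith

set_option maxHeartbeats 2000000 in
lemma signArith (r x t0 f : ℝ) (hr : 0 < r) (hx : x ≠ 0) (ht0 : t0 ≠ 0) (hf : f ≠ 0)
    (hu : x - r * t0 ≠ 0) :
    (if (0 - r * t0) * f < 0 then 1 else 0) + (if x * t0 < 0 then 1 else 0) ≤
      (if (0 - r * x) * (x - r * t0) < 0 then 1 else 0) +
        (if (x - r * t0) * f < 0 then (1:ℕ) else 0) := by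
  simp only [neg_r_mul_lt_iff r t0 f hr, neg_r_mul_lt_iff r x (x - r * t0) hr]
  rcases hx.lt_or_gt with h1 | h1 <;> rcases ht0.lt_or_gt with h2 | h2 <;>
    rcases hf.lt_or_gt with h3 | h3 <;> rcases hu.lt_or_gt with h4 | h4 <;>
    split_ifs with ha hb hc hd <;> first | (norm_num; done) | (exfalso; nlinarith)

noncomputable def convAux (r : ℝ) : ℝ → List ℝ → List ℝ
  | p, [] => [p]
  | p, x :: t => (p - r * x) :: convAux r x t

noncomputable def conv (r : ℝ) : List ℝ → List ℝ
  | [] => []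
  | x :: t => (0 - r * x) :: convAux r x t

lemma neg_r_self (r x : ℝ) (hr : 0 < r) (hx : x ≠ 0) : (0 - r * x) * x < 0 := by
  rcases hx.lt_or_gt with h | h
  · nlinarith [mul_pos hr (mul_pos_of_neg_of_neg h h)]
  · nlinarith [mul_pos hr (mul_pos h h)]

lemma convAux_allzero (r : ℝ) : ∀ (t : List ℝ), (∀ z ∈ t, z = 0) → ∀ x : ℝ, convAux r x t = x :: t := by
  intro t
  induction t with
  | nil => intro _ x; rfl
  | cons a t ih =>
    intro h x
    have ha : a = 0 := h a List.mem_cons_self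
    have ht : ∀ z ∈ t, z = 0 := fun z hz => h z (List.mem_cons_of_mem _ hz)
    simp only [convAux, ha, mul_zero, sub_zero]
    rw [ih ht 0]

lemma conv_lemma (r : ℝ) (hr : 0 < r) :
    ∀ b : List ℝ, (∃ z ∈ b, z ≠ 0) →
      signChanges b + 1 ≤ signChanges (conv r b) ∧ fsgn (conv r b) * fsgn b < 0 := by
  intro b
  induction b with
  | nil => rintro ⟨z, hz, _⟩; simp at hz
  | cons x t ih =>
    intro hb
    by_cases hx : x = 0
    · subst hx
      have hzt : ∃ z ∈ t, z ≠ 0 := by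
        rcases hb with ⟨z, hz, hz0⟩
        rcases List.mem_cons.mp hz with h | h
        · exact absurd h hz0
        · exact ⟨z, h, hz0⟩
      have hconv : conv r ((0:ℝ) :: t) = 0 :: conv r t := by
        rcases t with _ | ⟨t0, t'⟩
        · rcases hzt with ⟨z, hz, _⟩; simp at hz
        · show (0 - r * 0) :: convAux r 0 (t0 :: t') = 0 :: conv r (t0 :: t')
          norm_num [conv, convAux]
      rw [hconv, signChanges_cons_zero, signChanges_cons_zero, fsgn_cons_zero, fsgn_cons_zero]
      exact ih hzt
    · -- x ≠ 0
      have hrx : (0 - r * x) ≠ 0 := by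
        intro h; apply hx; nlinarith [sub_eq_zero.mp h]
      have hs : (0 - r * x) * x < 0 := neg_r_self r x hr hx
      have hfx : fsgn (x :: t) = x := fsgn_cons_nz hx t
      by_cases ht : ∀ z ∈ t, z = 0
      · -- t is all zeros
        have hca : convAux r x t = x :: t := convAux_allzero r t ht x
        have hconv : conv r (x :: t) = (0 - r * x) :: x :: t := by
          rcases t with _ | ⟨t0, t'⟩
          · rfl
          · show (0 - r * x) :: convAux r x (t0 :: t') = _
            rw [hca]
        have hft : t.filter (fun x => decide (x ≠ 0)) = [] :=
          List.filter_eq_nil_iff.mpr (by intro a h; simpa using ht a h)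
        have hvt : signChanges t = 0 := signChanges_eq_zero t hft
        have hfst : fsgn t = 0 := (fsgn_eq_zero_iff t).mpr hft
        have hvxt : signChanges (x :: t) = 0 := by
          rw [signChanges_cons hx, hfst, hvt]
          simp
        constructor
        · rw [hvxt, hconv, signChanges_cons hrx, fsgn_cons_nz hx, if_pos hs, hvxt]
        · rw [hconv, fsgn_cons_nz hrx, hfx]
          exact hs
      · push_neg at ht
        obtain ⟨z, hz, hz0⟩ := ht
        have hzt : ∃ z ∈ t, z ≠ 0 := ⟨z, hz, hz0⟩
        obtain ⟨ihV, ihS⟩ := ih hzt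
        rcases t with _ | ⟨t0, t'⟩
        · simp at hz
        set T := convAux r t0 t' with hT
        have hconvt : conv r (t0 :: t') = (0 - r * t0) :: T := rfl
        have hconvxt : conv r (x :: t0 :: t') = (0 - r * x) :: (x - r * t0) :: T := rfl
        constructor
        swap
        · rw [hconvxt, fsgn_cons_nz hrx, hfx]
          exact hs
        rw [hconvxt]
        by_cases ht0 : t0 = 0
        · -- case (i)
          subst ht0
          have h00 : (0 - r * 0 : ℝ) = 0 := by ring
          have e : conv r ((0:ℝ) :: t') = (0:ℝ) :: T := by rw [hconvt, h00]
          have ihV' : signChanges t' + 1 ≤ signChanges T := by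
            rw [e, signChanges_cons_zero, signChanges_cons_zero] at ihV
            exact ihV
          have hxr : x - r * 0 = x := by ring
          rw [hxr]
          rw [signChanges_cons hx, fsgn_cons_zero, signChanges_cons_zero]
          rw [signChanges_cons hrx, fsgn_cons_nz hx, if_pos hs, signChanges_cons hx]
          split_ifs <;> omega
        · -- case (ii), t0 ≠ 0
          have hfst : fsgn (t0 :: t') = t0 := fsgn_cons_nz ht0 t'
          have hrt0 : (0 - r * t0) ≠ 0 := by
            intro h; apply ht0; nlinarith [sub_eq_zero.mp h]
          rw [hconvt, signChanges_cons hrt0] at ihV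
          have hfTne : fsgn T ≠ 0 := by
            intro h0
            have hzT : signChanges T = 0 := signChanges_eq_zero T ((fsgn_eq_zero_iff T).mp h0)
            rw [h0, mul_zero, hzT, if_neg (lt_irrefl (0:ℝ))] at ihV
            omega
          rw [signChanges_cons hx, hfst]
          by_cases hu : x - r * t0 = 0
          · rw [hu]
            rw [signChanges_cons hrx, fsgn_cons_zero, signChanges_cons_zero]
            have hx_eq : x = r * t0 := by linarith [sub_eq_zero.mp hu]
            have hD : ¬ (x * t0 < 0) := by
              rw [hx_eq]
              rcases Ne.lt_or_gt ht0 with h | h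
              · nlinarith [mul_pos hr (mul_pos_of_neg_of_neg h h)]
              · nlinarith [mul_pos hr (mul_pos h h)]
            have hAC : ((0 - r * x) * fsgn T < 0) ↔ ((0 - r * t0) * fsgn T < 0) := by
              rw [neg_r_mul_lt_iff _ _ _ hr, neg_r_mul_lt_iff _ _ _ hr, hx_eq]
              constructor <;> intro h <;> nlinarith
            rw [if_neg hD]
            split_ifs with h1
            · rw [if_pos (hAC.mp h1)] at ihV; omega
            · rw [if_neg (fun hh => h1 (hAC.mpr hh))] at ihV; omega
          · rw [signChanges_cons hrx, fsgn_cons_nz hu, signChanges_cons hu]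
            have key := signArith r x t0 (fsgn T) hr hx ht0 hfTne hu
            split_ifs at key ihV ⊢ <;> omega

lemma coeff_succ (r : ℝ) (q : ℝ[X]) (k : ℕ) :
    ((X - C r) * q).coeff (k + 1) = q.coeff k - r * q.coeff (k + 1) := by
  rw [sub_mul, coeff_sub, coeff_X_mul, coeff_C_mul]

lemma coeff_zero' (r : ℝ) (q : ℝ[X]) :
    ((X - C r) * q).coeff 0 = 0 - r * q.coeff 0 := by
  rw [mul_coeff_zero, coeff_sub, coeff_X_zero, coeff_C_zero]
  ring

lemma convAux_range' (r : ℝ) (q : ℝ[X]) :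
    ∀ (n k : ℕ), k + n = q.natDegree →
      convAux r (q.coeff k) ((List.range' (k + 1) n).map q.coeff)
        = (List.range' (k + 1) (n + 1)).map (((X - C r) * q).coeff) := by
  intro n
  induction n with
  | zero =>
    intro k hk
    rw [List.range'_zero, List.range'_one, List.map_nil, List.map_cons, List.map_nil]
    simp only [convAux]
    have h0 : q.coeff (k + 1) = 0 := coeff_eq_zero_of_natDegree_lt (by omega)
    rw [coeff_succ, h0]
    ring_nf
  | succ n ihn =>
    intro k hk
    rw [List.range'_succ (s := k + 1) (n := n), List.map_cons]
    show (q.coeff k - r * q.coeff (k + 1)) :: convAux r (q.coeff (k + 1)) ((List.range' (k + 1 + 1) n).map q.coeff) = _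
    rw [ihn (k + 1) (by omega)]
    rw [List.range'_succ (s := k + 1) (n := n + 1), List.map_cons]
    rw [← coeff_succ]

lemma conv_coeffs (r : ℝ) (q : ℝ[X]) (hq : q ≠ 0) :
    (List.range (((X - C r) * q).natDegree + 1)).map (((X - C r) * q).coeff)
      = conv r ((List.range (q.natDegree + 1)).map q.coeff) := by
  have hXr : (X - C r : ℝ[X]) ≠ 0 := X_sub_C_ne_zero r
  have hdeg : ((X - C r) * q).natDegree = q.natDegree + 1 := by
    rw [natDegree_mul hXr hq, natDegree_X_sub_C]
    omega
  rw [hdeg, List.range_eq_range', List.range_eq_range']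
  rw [List.range'_succ (s := 0) (n := q.natDegree + 1), List.range'_succ (s := 0) (n := q.natDegree)]
  rw [List.map_cons, List.map_cons]
  show _ = (0 - r * q.coeff 0) :: convAux r (q.coeff 0) ((List.range' (0 + 1) q.natDegree).map q.coeff)
  rw [convAux_range' r q q.natDegree 0 (by omega), coeff_zero']

lemma step (r : ℝ) (hr : 0 < r) (q : ℝ[X]) (hq : q ≠ 0) :
    coeffSignChanges q + 1 ≤ coeffSignChanges ((X - C r) * q) := by
  unfold coeffSignChanges
  rw [conv_coeffs r q hq]
  refine (conv_lemma r hr _ ?_).1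
  refine ⟨q.coeff q.natDegree, ?_, ?_⟩
  · exact List.mem_map.mpr ⟨q.natDegree, List.mem_range.mpr (by omega), rfl⟩
  · exact leadingCoeff_ne_zero.mpr hq

lemma descartes_aux : ∀ (n : ℕ) (p : ℝ[X]), p ≠ 0 →
    (p.roots.filter (fun x => 0 < x)).card = n →
    (p.roots.filter (fun x => 0 < x)).card ≤ coeffSignChanges p := by
  intro n
  induction n with
  | zero => intro p hp h; rw [h]; exact Nat.zero_le _
  | succ n ihn =>
    intro p hp h
    have hne : p.roots.filter (fun x => 0 < x) ≠ 0 := by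
      intro h0; rw [h0] at h; simp at h
    obtain ⟨r, hr⟩ := Multiset.exists_mem_of_ne_zero hne
    rw [Multiset.mem_filter] at hr
    obtain ⟨hr_root, hr_pos⟩ := hr
    have hroot : p.IsRoot r := isRoot_of_mem_roots hr_root
    obtain ⟨q, hq⟩ := dvd_iff_isRoot.mpr hroot
    have hq0 : q ≠ 0 := by rintro rfl; rw [mul_zero] at hq; exact hp hq
    have hroots : p.roots = r ::ₘ q.roots := by
      rw [hq, roots_mul (hq ▸ hp), roots_X_sub_C]
      rfl
    have hfilter : p.roots.filter (fun x => 0 < x) = r ::ₘ q.roots.filter (fun x => 0 < x) := by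
      rw [hroots, Multiset.filter_cons, if_pos hr_pos, Multiset.singleton_add]
    have hcard : (q.roots.filter (fun x => 0 < x)).card = n := by
      rw [hfilter, Multiset.card_cons] at h
      omega
    have hih := ihn q hq0 hcard
    have hstep := step r hr_pos q hq0
    rw [hfilter, Multiset.card_cons, hq]
    unfold coeffSignChanges at *
    omega

end Descartes

/-- Descartes' rule of signs (upper bound): a nonzero real polynomial has at most `V`
zeros in `(0, ∞)` counted with multiplicity, where `V` is the number of sign changes
of its coefficient sequence. -/
theorem descartes_rule_of_signs (p : Polynomial ℝ) (hp : p ≠ 0) :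
    (p.roots.filter (fun x => 0 < x)).card ≤ coeffSignChanges p := by
  exact Descartes.descartes_aux _ p hp rfl
end

section
/- Let a, b, n be natural numbers with a + b ≤ n. The linear map Φ : ℝ[t]_{<n-b} × ℝ[t]_{<n-a} → ℝ[t]_{<n} defined by Φ(r,s) = (t+1)^b r(t) + (t-1)^a s(t) is surjective, and its kernel is exactly {((t-1)^a p, -(t+1)^b p) : p ∈ ℝ[t]_{< n - a - b}}, which has dimension n - a - b. -/
open Polynomial

/-- The linear map `Φ(r, s) = (t+1)^b r(t) + (t-1)^a s(t)` from
`ℝ[t]_{<n-b} × ℝ[t]_{<n-a}` to real polynomials. -/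
noncomputable def Phi (a b n : ℕ) :
    (Polynomial.degreeLT ℝ (n - b) × Polynomial.degreeLT ℝ (n - a)) →ₗ[ℝ] Polynomial ℝ where
  toFun rs := (Polynomial.X + 1) ^ b * (rs.1 : Polynomial ℝ) +
    (Polynomial.X - 1) ^ a * (rs.2 : Polynomial ℝ)
  map_add' x y := by simp [mul_add]; ring
  map_smul' c x := by simp [smul_add, Polynomial.smul_eq_C_mul]; ring

lemma isCoprime_Xp1_Xm1 : IsCoprime ((X + 1 : ℝ[X])) (X - 1) := by
  refine ⟨C (2⁻¹ : ℝ), -C (2⁻¹ : ℝ), ?_⟩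
  have h2 : (C (2⁻¹ : ℝ) * 2 : ℝ[X]) = 1 := by
    have h : ((2 : ℝ[X])) = C 2 := by simp [map_ofNat]
    rw [h, ← C_mul]; norm_num
  linear_combination h2

lemma degXp1 (b : ℕ) : ((X + 1 : ℝ[X]) ^ b).degree = (b : WithBot ℕ) := by
  have h : (X + 1 : ℝ[X]) = X + C 1 := by simp
  rw [h, degree_pow, degree_X_add_C]; simp

lemma degXm1 (a : ℕ) : ((X - 1 : ℝ[X]) ^ a).degree = (a : WithBot ℕ) := by
  have h : (X - 1 : ℝ[X]) = X - C 1 := by simp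
  rw [h, degree_pow, degree_X_sub_C]; simp

lemma cancel_left {k : ℕ} {x y : WithBot ℕ} (hx : (k : WithBot ℕ) + x < (k : WithBot ℕ) + y) :
    x < y :=
  (WithBot.add_lt_add_iff_left (by exact WithBot.coe_ne_bot)).mp hx

lemma cast_sub_aux {k m : ℕ} (hk : k ≤ m) :
    ((m : WithBot ℕ)) = (k : WithBot ℕ) + ((m - k : ℕ) : WithBot ℕ) := by
  rw [← Nat.cast_add]
  norm_cast
  omega

instance degreeLT_findim (m : ℕ) : FiniteDimensional ℝ (Polynomial.degreeLT ℝ m) :=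
  (Polynomial.degreeLTEquiv ℝ m).symm.finiteDimensional

lemma finrank_degreeLT (m : ℕ) : Module.finrank ℝ (Polynomial.degreeLT ℝ m) = m := by
  rw [(Polynomial.degreeLTEquiv ℝ m).finrank_eq, Module.finrank_fin_fun]

/-- For `a + b ≤ n`, the map `Φ(r,s) = (t+1)^b r + (t-1)^a s` maps
`ℝ[t]_{<n-b} × ℝ[t]_{<n-a}` onto `ℝ[t]_{<n}`, and its kernel is
`{((t-1)^a p, -(t+1)^b p) : p ∈ ℝ[t]_{<n-a-b}}`, which has dimension `n - a - b`. -/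
theorem phi_surjective_kernel (a b n : ℕ) (h : a + b ≤ n) :
    LinearMap.range (Phi a b n) = Polynomial.degreeLT ℝ n ∧
    (∀ rs : Polynomial.degreeLT ℝ (n - b) × Polynomial.degreeLT ℝ (n - a),
      rs ∈ LinearMap.ker (Phi a b n) ↔
        ∃ p ∈ Polynomial.degreeLT ℝ (n - a - b),
          (rs.1 : Polynomial ℝ) = (Polynomial.X - 1) ^ a * p ∧
          (rs.2 : Polynomial ℝ) = -((Polynomial.X + 1) ^ b * p)) ∧
    Module.finrank ℝ (LinearMap.ker (Phi a b n)) = n - a - b := by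
  have hb : b ≤ n := le_trans (Nat.le_add_left b a) h
  have ha : a ≤ n := le_trans (Nat.le_add_right a b) h
  have hcop : IsCoprime ((X + 1 : ℝ[X]) ^ b) ((X - 1) ^ a) := isCoprime_Xp1_Xm1.pow
  have hXm1ne : ((X - 1 : ℝ[X]) ^ a) ≠ 0 := by
    intro hc
    have := degXm1 a
    rw [hc, degree_zero] at this
    exact (WithBot.bot_ne_coe) this
  -- range
  have hrange : LinearMap.range (Phi a b n) = Polynomial.degreeLT ℝ n := by
    apply le_antisymm
    · rintro q ⟨⟨r, s⟩, rfl⟩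
      rw [Polynomial.mem_degreeLT]
      show ((X + 1 : ℝ[X]) ^ b * (r : ℝ[X]) + (X - 1) ^ a * (s : ℝ[X])).degree < (n : WithBot ℕ)
      apply lt_of_le_of_lt (degree_add_le _ _)
      apply max_lt
      · rw [degree_mul, degXp1, cast_sub_aux hb]
        exact WithBot.add_lt_add_left WithBot.coe_ne_bot
          (Polynomial.mem_degreeLT.mp r.2)
      · rw [degree_mul, degXm1, cast_sub_aux ha]
        exact WithBot.add_lt_add_left WithBot.coe_ne_bot
          (Polynomial.mem_degreeLT.mp s.2)
    · intro q hq
      rw [Polynomial.mem_degreeLT] at hq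
      obtain ⟨u, v, huv⟩ := hcop
      have hmon : ((X + 1 : ℝ[X]) ^ b).Monic := by
        have h1 : (X + 1 : ℝ[X]) = X + C 1 := by simp
        rw [h1]; exact (monic_X_add_C 1).pow _
      set s : ℝ[X] := (v * q) %ₘ ((X + 1) ^ b) with hs
      set r : ℝ[X] := u * q + (X - 1) ^ a * ((v * q) /ₘ ((X + 1) ^ b)) with hr
      have hdiv := Polynomial.modByMonic_add_div (v * q) ((X + 1 : ℝ[X]) ^ b)
      have key : (X + 1 : ℝ[X]) ^ b * r + (X - 1) ^ a * s = q := by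
        rw [hr, hs]
        have h2 : (X - 1 : ℝ[X]) ^ a * ((v * q) %ₘ (X + 1) ^ b)
            + (X - 1) ^ a * ((X + 1) ^ b * ((v * q) /ₘ (X + 1) ^ b))
            = (X - 1) ^ a * (v * q) := by
          rw [← mul_add, hdiv]
        linear_combination h2 + q * huv
      have hsdeg : s.degree < ((b : ℕ) : WithBot ℕ) := by
        rw [hs, ← degXp1 b]
        exact degree_modByMonic_lt _ hmon
      have hsmem : s ∈ Polynomial.degreeLT ℝ (n - a) := by
        rw [Polynomial.mem_degreeLT]
        exact lt_of_lt_of_le hsdeg (by exact_mod_cast (show b ≤ n - a by omega))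
      have hrmem : r ∈ Polynomial.degreeLT ℝ (n - b) := by
        rw [Polynomial.mem_degreeLT]
        have h1 : ((X + 1 : ℝ[X]) ^ b * r).degree < (n : WithBot ℕ) := by
          have h2 : (X + 1 : ℝ[X]) ^ b * r = q - (X - 1) ^ a * s := by
            linear_combination key
          rw [h2]
          apply lt_of_le_of_lt (degree_sub_le _ _)
          apply max_lt hq
          rw [degree_mul, degXm1]
          calc (a : WithBot ℕ) + s.degree < (a : WithBot ℕ) + ((b : ℕ) : WithBot ℕ) :=
                WithBot.add_lt_add_left WithBot.coe_ne_bot hsdeg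
            _ = ((a + b : ℕ) : WithBot ℕ) := by push_cast; ring
            _ ≤ (n : WithBot ℕ) := by exact_mod_cast h
        rw [degree_mul, degXp1, cast_sub_aux hb] at h1
        exact cancel_left h1
      exact ⟨⟨⟨r, hrmem⟩, ⟨s, hsmem⟩⟩, key⟩
  -- kernel characterization
  have hker : ∀ rs : Polynomial.degreeLT ℝ (n - b) × Polynomial.degreeLT ℝ (n - a),
      rs ∈ LinearMap.ker (Phi a b n) ↔
        ∃ p ∈ Polynomial.degreeLT ℝ (n - a - b),
          (rs.1 : ℝ[X]) = (X - 1) ^ a * p ∧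
          (rs.2 : ℝ[X]) = -((X + 1) ^ b * p) := by
    rintro ⟨r, s⟩
    rw [LinearMap.mem_ker]
    constructor
    · intro h0
      have h0' : (X + 1 : ℝ[X]) ^ b * (r : ℝ[X]) + (X - 1) ^ a * (s : ℝ[X]) = 0 := h0
      have hdvd : ((X - 1 : ℝ[X]) ^ a) ∣ (r : ℝ[X]) := by
        apply (hcop.symm).dvd_of_dvd_mul_left
        exact ⟨-(s : ℝ[X]), by linear_combination h0'⟩
      obtain ⟨p, hp⟩ := hdvd
      have hsval : (s : ℝ[X]) = -((X + 1) ^ b * p) := by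
        have hfac : (X - 1 : ℝ[X]) ^ a * ((X + 1) ^ b * p + (s : ℝ[X])) = 0 := by
          rw [hp] at h0'; linear_combination h0'
        rcases mul_eq_zero.mp hfac with hc | hc
        · exact absurd hc hXm1ne
        · linear_combination hc
      refine ⟨p, ?_, hp, hsval⟩
      rw [Polynomial.mem_degreeLT]
      rcases eq_or_ne p 0 with rfl | hpne
      · simp only [degree_zero]; exact WithBot.bot_lt_coe (n - a - b)
      · have hrd : ((r : ℝ[X])).degree < ((n - b : ℕ) : WithBot ℕ) :=
          Polynomial.mem_degreeLT.mp r.2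
        rw [hp, degree_mul, degXm1] at hrd
        have h2 : ((n - b : ℕ) : WithBot ℕ)
            = (a : WithBot ℕ) + ((n - a - b : ℕ) : WithBot ℕ) := by
          rw [← Nat.cast_add]; norm_cast; omega
        rw [h2] at hrd
        exact cancel_left hrd
    · rintro ⟨p, hpmem, hr, hs⟩
      show (X + 1 : ℝ[X]) ^ b * (r : ℝ[X]) + (X - 1) ^ a * (s : ℝ[X]) = 0
      rw [hr, hs]; ring
  refine ⟨hrange, hker, ?_⟩
  -- finrank
  have hrn := LinearMap.finrank_range_add_finrank_ker (Phi a b n)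
  rw [hrange] at hrn
  rw [finrank_degreeLT, Module.finrank_prod, finrank_degreeLT, finrank_degreeLT] at hrn
  omega
end

section
/- Let a, b, n be natural numbers with n < a + b ≤ 2n. The linear map Φ : ℝ[t]_{<n-b} × ℝ[t]_{<n-a} × ℝ[t]_{<a+b-n} → ℝ[t]_{<n} defined by Φ(r,s,q) = (t+1)^b r(t) + (t-1)^a s(t) + q(t) is bijective. -/
/-!
Let `k = a + b - n`. If `(t+1)^b r + (t-1)^a s + q = 0`, differentiating `k` times kills `q`,
and the `k`-th derivative of `(t+1)^b r` is then divisible by `(t+1)^(b-k) (t-1)^(a-k)`,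
a polynomial of degree `n - k`, while its own degree is `< n - k`. Hence it vanishes, so
`(t+1)^b r` has degree `< k ≤ b`, i.e. `r = 0`; symmetrically `s = 0`, and then `q = 0`.
Surjectivity onto `ℝ[t]_{<n}` follows by counting dimensions: `(n-b) + (n-a) + (a+b-n) = n`.
-/

open Polynomial

/-- The linear map `Φ(r, s, q) = (t+1)^b r(t) + (t-1)^a s(t) + q(t)` from
`ℝ[t]_{<n-b} × ℝ[t]_{<n-a} × ℝ[t]_{<a+b-n}` to real polynomials. -/
noncomputable def Phi3 (a b n : ℕ) :
    (Polynomial.degreeLT ℝ (n - b) × Polynomial.degreeLT ℝ (n - a) ×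
      Polynomial.degreeLT ℝ (a + b - n)) →ₗ[ℝ] Polynomial ℝ where
  toFun rsq := (Polynomial.X + 1) ^ b * (rsq.1 : Polynomial ℝ) +
    (Polynomial.X - 1) ^ a * (rsq.2.1 : Polynomial ℝ) + (rsq.2.2 : Polynomial ℝ)
  map_add' x y := by simp [mul_add]; ring
  map_smul' c x := by simp [smul_add, Polynomial.smul_eq_C_mul]; ring

namespace Polynomial

theorem natDegree_lt_of_iterate_derivative_eq_zero {R : Type*} [Semiring R] [IsAddTorsionFree R]
    {p : R[X]} (hp : p ≠ 0) {k : ℕ} (h : derivative^[k] p = 0) : p.natDegree < k := by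
  induction k generalizing p with
  | zero => exact absurd h hp
  | succ k ih =>
    rw [Function.iterate_succ_apply] at h
    by_cases hp' : derivative p = 0
    · rw [derivative_eq_zero] at hp'
      omega
    · have hlt := ih hp' h
      rw [natDegree_derivative] at hlt
      omega

theorem mul_mem_degreeLT_add {R : Type*} [Semiring R] {p r : R[X]} {i m : ℕ}
    (hp : p.degree ≤ i) (hr : r ∈ degreeLT R m) : p * r ∈ degreeLT R (i + m) := by
  rw [mem_degreeLT] at hr ⊢
  calc (p * r).degree ≤ i + r.degree := degree_mul_le_of_le hp le_rfl
    _ < i + m := WithBot.add_lt_add_left WithBot.coe_ne_bot hr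

theorem finrank_degreeLT {R : Type*} [Ring R] [StrongRankCondition R] (m : ℕ) :
    Module.finrank R (degreeLT R m) = m :=
  (degreeLTEquiv R m).finrank_eq.trans (Module.finrank_fin_fun R)

theorem eq_zero_of_pow_mul_add_pow_mul_add_eq_zero {K : Type*} [Field K] [CharZero K] {c d : K}
    (hcd : c ≠ d) {a b n : ℕ} (ha : a ≤ n) (hb : b ≤ n) (hab : n ≤ a + b) {r s q : K[X]}
    (hr : r ∈ degreeLT K (n - b)) (hq : q ∈ degreeLT K (a + b - n))
    (h : (X - C c) ^ b * r + (X - C d) ^ a * s + q = 0) : r = 0 := by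
  set k := a + b - n
  set f := (X - C c) ^ b * r
  by_contra hr0
  have hf0 : f ≠ 0 := mul_ne_zero (pow_ne_zero _ (X_sub_C_ne_zero c)) hr0
  have hf : f.natDegree = b + r.natDegree := by
    rw [natDegree_mul (pow_ne_zero _ (X_sub_C_ne_zero c)) hr0, natDegree_pow, natDegree_X_sub_C,
      mul_one]
  have hrn : r.natDegree < n - b := (natDegree_lt_iff_degree_lt hr0).2 (mem_degreeLT.1 hr)
  have hDf : derivative^[k] f = -derivative^[k] ((X - C d) ^ a * s) := by
    rw [eq_neg_iff_add_eq_zero, ← iterate_map_add, eq_neg_of_add_eq_zero_left h,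
      iterate_derivative_neg, iterate_derivative_eq_zero_of_degree_lt (mem_degreeLT.1 hq),
      neg_zero]
  have hdvd : (X - C c) ^ (b - k) * (X - C d) ^ (a - k) ∣ derivative^[k] f := by
    refine ((isCoprime_X_sub_C_of_isUnit_sub (sub_ne_zero.2 hcd).isUnit).pow).mul_dvd
      (pow_sub_dvd_iterate_derivative_of_pow_dvd k (dvd_mul_right _ _)) ?_
    rw [hDf]
    exact (pow_sub_dvd_iterate_derivative_of_pow_dvd k (dvd_mul_right _ _)).neg_right
  have hD0 : derivative^[k] f = 0 := by
    by_contra hD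
    have hle := natDegree_le_of_dvd hdvd hD
    rw [natDegree_mul (pow_ne_zero _ (X_sub_C_ne_zero c)) (pow_ne_zero _ (X_sub_C_ne_zero d)),
      natDegree_pow, natDegree_pow, natDegree_X_sub_C, natDegree_X_sub_C] at hle
    have hge := natDegree_iterate_derivative f k
    omega
  have hlt := natDegree_lt_of_iterate_derivative_eq_zero hf0 hD0
  omega

end Polynomial

theorem phi3_injective {a b n : ℕ} (ha : a ≤ n) (hb : b ≤ n) (hab : n ≤ a + b) :
    Function.Injective (Phi3 a b n) := by
  rw [← LinearMap.ker_eq_bot, LinearMap.ker_eq_bot']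
  rintro ⟨⟨r, hr⟩, ⟨s, hs⟩, ⟨q, hq⟩⟩ h
  replace h : (X - C (-1)) ^ b * r + (X - C 1) ^ a * s + q = 0 := by
    rw [map_neg, C_1, sub_neg_eq_add]
    exact h
  have hr0 : r = 0 := eq_zero_of_pow_mul_add_pow_mul_add_eq_zero (by norm_num) ha hb hab hr hq h
  have hs0 : s = 0 := eq_zero_of_pow_mul_add_pow_mul_add_eq_zero (c := 1) (d := -1) (s := r)
    (by norm_num) hb ha (by omega) hs (by rwa [add_comm b]) (by linear_combination h)
  have hq0 : q = 0 := by simpa [hr0, hs0] using h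
  simp [hr0, hs0, hq0]

theorem range_phi3_le {a b n : ℕ} (ha : a ≤ n) (hb : b ≤ n) :
    LinearMap.range (Phi3 a b n) ≤ degreeLT ℝ n := by
  rintro _ ⟨⟨⟨r, hr⟩, ⟨s, hs⟩, ⟨q, hq⟩⟩, rfl⟩
  refine add_mem (add_mem ?_ ?_) (degreeLT_mono (by omega) hq)
  · have hp : ((X + 1 : ℝ[X]) ^ b).degree ≤ b := by compute_degree!
    simpa only [Nat.add_sub_cancel' hb] using mul_mem_degreeLT_add hp hr
  · have hp : ((X - 1 : ℝ[X]) ^ a).degree ≤ a := by compute_degree!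
    simpa only [Nat.add_sub_cancel' ha] using mul_mem_degreeLT_add hp hs

theorem phi3_bijective_general (a b n : ℕ) (ha : a ≤ n) (hb : b ≤ n)
    (h1 : n < a + b) :
    Function.Injective (Phi3 a b n) ∧
    LinearMap.range (Phi3 a b n) = Polynomial.degreeLT ℝ n := by
  have hinj := phi3_injective ha hb h1.le
  refine ⟨hinj, Submodule.eq_of_le_of_finrank_le (range_phi3_le ha hb) ?_⟩
  rw [LinearMap.finrank_range_of_inj hinj, Module.finrank_prod, Module.finrank_prod,
    finrank_degreeLT, finrank_degreeLT, finrank_degreeLT, finrank_degreeLT]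
  omega

/-- For `a, b ≤ n < a + b ≤ 2n`, the map
`Φ(r,s,q) = (t+1)^b r + (t-1)^a s + q` is a bijection from
`ℝ[t]_{<n-b} × ℝ[t]_{<n-a} × ℝ[t]_{<a+b-n}` onto `ℝ[t]_{<n}`. -/
theorem phi3_bijective (a b n : ℕ) (ha : a ≤ n) (hb : b ≤ n)
    (h1 : n < a + b) (h2 : a + b ≤ 2 * n) :
    Function.Injective (Phi3 a b n) ∧
    LinearMap.range (Phi3 a b n) = Polynomial.degreeLT ℝ n :=
  phi3_bijective_general a b n ha hb h1
end

section
/- If a polynomial p of degree ≤ n over ℝ satisfies ∫_{-1}^1 (t+1)^b r(t) p(t) w(t) dt = 0 for all real polynomials r of degree < n - b, ∫_{-1}^1 (t-1)^a s(t) p(t) w(t) dt = 0 for all s of degree < n - a, where a + b ≤ n and w is a fixed integrable weight, then ∫_{-1}^1 q(t) p(t) w(t) dt = 0 for all polynomials q of degree < n. -/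
open Polynomial MeasureTheory

-- surjectivity lemma
lemma decomp (a b n : ℕ) (h : a + b ≤ n) (q : Polynomial ℝ) (hq : q.degree < (n : ℕ)) :
    ∃ r s : Polynomial ℝ, r.degree < ((n - b : ℕ) : ℕ) ∧ s.degree < ((n - a : ℕ) : ℕ) ∧
      q = (X + 1) ^ b * r + (X - 1) ^ a * s := by
  have hcop : IsCoprime ((X + 1 : Polynomial ℝ) ^ b) ((X - 1) ^ a) := by
    have : IsCoprime (X + 1 : Polynomial ℝ) (X - 1) := by
      have := isCoprime_X_sub_C_of_isUnit_sub (a := (-1 : ℝ)) (b := 1) (by norm_num)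
      simpa [sub_eq_add_neg] using this
    exact this.pow
  obtain ⟨u, v, huv⟩ := hcop
  have hmon : ((X - 1 : Polynomial ℝ) ^ a).Monic := by
    simpa using (monic_X_sub_C (1 : ℝ)).pow a
  have hdegm : ((X - 1 : Polynomial ℝ) ^ a).degree = a := by
    have h1 : (X - 1 : Polynomial ℝ).degree = 1 := by
      simpa using degree_X_sub_C (1 : ℝ)
    simp [degree_pow, h1]
  set r := (u * q) %ₘ ((X - 1) ^ a) with hr
  have hrd : r.degree < a := hdegm ▸ degree_modByMonic_lt (u * q) hmon
  have hdvd : ((X - 1 : Polynomial ℝ) ^ a) ∣ q - (X + 1) ^ b * r := by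
    have h1 : q = u * q * (X + 1) ^ b + v * q * (X - 1) ^ a := by
      calc q = (u * (X+1)^b + v * (X-1)^a) * q := by rw [huv]; ring
        _ = _ := by ring
    have h2 : ((X - 1 : Polynomial ℝ) ^ a) ∣ u * q - r := by
      have := modByMonic_add_div (u * q) ((X - 1 : Polynomial ℝ) ^ a)
      exact ⟨(u * q) /ₘ ((X - 1) ^ a), by linear_combination -this⟩
    obtain ⟨c, hc⟩ := h2
    exact ⟨(X + 1) ^ b * c + v * q, by linear_combination h1 + (X+1)^b * hc⟩
  obtain ⟨s, hs⟩ := hdvd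
  refine ⟨r, s, ?_, ?_, by linear_combination hs⟩
  · exact lt_of_lt_of_le hrd (by exact_mod_cast Nat.cast_le.2 (Nat.le_sub_of_add_le (by omega)))
  · have hd1 : ((X + 1 : Polynomial ℝ) ^ b * r).degree < n := by
      rcases eq_or_ne r 0 with h0 | h0
      · simp [h0]
      · rw [degree_mul]
        have : ((X + 1 : Polynomial ℝ) ^ b).degree = b := by
          have h1 : (X + 1 : Polynomial ℝ).degree = 1 := by
            simpa using degree_X_add_C (1 : ℝ)
          simp [degree_pow, h1]
        rw [this]
        calc (b : WithBot ℕ) + r.degree < (b : WithBot ℕ) + a := by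
              exact WithBot.add_lt_add_left (by simp) hrd
          _ ≤ (n : WithBot ℕ) := by
              rw [← Nat.cast_add]; exact_mod_cast (by omega : b + a ≤ n)
    have hdiff : (q - (X + 1) ^ b * r).degree < (n : WithBot ℕ) := lt_of_le_of_lt (degree_sub_le _ _) (max_lt hq hd1)
    rw [hs, degree_mul, hdegm] at hdiff
    rcases eq_or_ne s 0 with h0 | h0
    · simp [h0]
    · have ha : a ≤ n := by omega
      have : (a : WithBot ℕ) + s.degree < (a : WithBot ℕ) + (n - a : ℕ) := by
        rw [← Nat.cast_add]
        simpa [Nat.add_sub_cancel' ha] using hdiff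
      exact lt_of_add_lt_add_left this

/-- If `p` (degree `≤ n`) is orthogonal on `(-1,1)` with respect to an integrable weight `w`
to all `(t+1)^b r(t)` with `deg r < n - b` and to all `(t-1)^a s(t)` with `deg s < n - a`,
where `a + b ≤ n`, then `p` is orthogonal to all polynomials of degree `< n`. -/
theorem orthogonality_from_two_families (a b n : ℕ) (h : a + b ≤ n)
    (w : ℝ → ℝ) (p : Polynomial ℝ) (hp : p.natDegree ≤ n)
    (hint : ∀ q : Polynomial ℝ,
      IntervalIntegrable (fun t => q.eval t * p.eval t * w t) MeasureTheory.volume (-1) 1)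
    (h1 : ∀ r : Polynomial ℝ, r.degree < (n - b : ℕ) →
      (∫ t in (-1:ℝ)..1, (t + 1) ^ b * r.eval t * p.eval t * w t) = 0)
    (h2 : ∀ s : Polynomial ℝ, s.degree < (n - a : ℕ) →
      (∫ t in (-1:ℝ)..1, (t - 1) ^ a * s.eval t * p.eval t * w t) = 0) :
    ∀ q : Polynomial ℝ, q.degree < (n : ℕ) →
      (∫ t in (-1:ℝ)..1, q.eval t * p.eval t * w t) = 0 := by
  intro q hq
  obtain ⟨r, s, hrd, hsd, hqrs⟩ := decomp a b n h q hq
  have e1 : (fun t => (t + 1) ^ b * r.eval t * p.eval t * w t)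
      = fun t => ((X + 1) ^ b * r).eval t * p.eval t * w t := by
    funext t; simp [eval_mul, eval_pow]
  have e2 : (fun t => (t - 1) ^ a * s.eval t * p.eval t * w t)
      = fun t => ((X - 1) ^ a * s).eval t * p.eval t * w t := by
    funext t; simp [eval_mul, eval_pow]
  have i1 : IntervalIntegrable (fun t => (t + 1) ^ b * r.eval t * p.eval t * w t)
      volume (-1) 1 := e1 ▸ hint _
  have i2 : IntervalIntegrable (fun t => (t - 1) ^ a * s.eval t * p.eval t * w t)
      volume (-1) 1 := e2 ▸ hint _
  have : (fun t => q.eval t * p.eval t * w t)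
      = fun t => (t + 1) ^ b * r.eval t * p.eval t * w t
          + (t - 1) ^ a * s.eval t * p.eval t * w t := by
    funext t
    rw [hqrs]
    simp [eval_mul, eval_pow]
    ring
  rw [this, intervalIntegral.integral_add i1 i2, h1 r hrd, h2 s hsd, add_zero]
end

section
/- For real α, β with β > -1 and -n < α < -1, α ∉ ℤ, set k = ⌊-α⌋. Then the Jacobi polynomial P_n^{(α,β)} satisfies ∫_{-1}^1 q(t) P_n^{(α,β)}(t) (1-t)^{α+k} (1+t)^β dt = 0 for every polynomial q of degree ≤ n - k - 1, while the integral is nonzero for q(t) = t^{n-k}. -/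
open Finset Polynomial

/-- Generalized binomial coefficient `C(x, m) = x(x-1)⋯(x-m+1)/m!` for real `x`. -/
noncomputable def gbinomR (x : ℝ) (m : ℕ) : ℝ :=
  (∏ i ∈ Finset.range m, (x - i)) / (Nat.factorial m)

/-- The Jacobi polynomial `P_n^{(α,β)}` for real parameters, as a real polynomial. -/
noncomputable def jacobiR (n : ℕ) (α β : ℝ) : Polynomial ℝ :=
  (2 : ℝ)⁻¹ ^ n • ∑ j ∈ Finset.range (n + 1),
    Polynomial.C (gbinomR ((n : ℝ) + α) (n - j) * gbinomR ((n : ℝ) + β) j) *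
      (Polynomial.X - 1) ^ j * (Polynomial.X + 1) ^ (n - j)

/-!
Expanding `P_n^{(α,β)}` in powers of `1 - t` and `1 + t` turns the moment
`∫ (1+t)^c P_n^{(α,β)}(t) (1-t)^{α+k} (1+t)^β dt` into a sum of Beta integrals. Writing the
Gamma factors with Pochhammer symbols, `Γ(x + m) = Γ(x) (x)_m`, the `j`-th term becomes a common
nonzero constant times `(-1)^j C(n,j) g(j)`, where `g(j) = (α+j+1)_k (β+n-j+1)_c` is a polynomial
in `j` of degree `k + c` with leading coefficient `(-1)^c`. The alternating sum is the `n`-th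
finite difference of `g`, which vanishes for `k + c < n` and equals `±n!` for `k + c = n`.
Expanding `q`, and `t^{n-k} - (t+1)^{n-k}`, in powers of `t + 1` then gives both claims.
-/

open MeasureTheory Set Nat

theorem Real.Gamma_add_nat_eq_mul_ascPochhammer {x : ℝ} (hx : ∀ m : ℕ, x ≠ -m) (n : ℕ) :
    Real.Gamma (x + n) = Real.Gamma x * (ascPochhammer ℝ n).eval x := by
  induction n with
  | zero => simp
  | succ n ih =>
    have hxn : x + n ≠ 0 := fun h => hx n (by linarith)
    rw [Nat.cast_succ, ← add_assoc, Real.Gamma_add_one hxn, ih, ascPochhammer_succ_right,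
      eval_mul, eval_add, eval_X, eval_natCast]
    ring

theorem gbinomR_eq_Gamma_div {y : ℝ} {m : ℕ} (hy : ∀ i : ℕ, y - m + 1 ≠ -i) :
    gbinomR y m = Real.Gamma (y + 1) / (m ! * Real.Gamma (y - m + 1)) := by
  have hΓ := Real.Gamma_add_nat_eq_mul_ascPochhammer hy m
  rw [show y - m + 1 + m = y + 1 by ring, ← descPochhammer_eval_eq_ascPochhammer,
    descPochhammer_eval_eq_prod_range] at hΓ
  rw [gbinomR, hΓ]
  field_simp [Real.Gamma_ne_zero hy]

theorem Real.integral_rpow_mul_one_sub_rpow {a b : ℝ} (ha : 0 < a) (hb : 0 < b) :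
    ∫ x in (0:ℝ)..1, x ^ (a - 1) * (1 - x) ^ (b - 1) =
      Real.Gamma a * Real.Gamma b / Real.Gamma (a + b) := by
  apply Complex.ofReal_injective
  rw [← intervalIntegral.integral_ofReal]
  push_cast
  rw [← Complex.Gamma_ofReal, ← Complex.Gamma_ofReal, ← Complex.Gamma_ofReal, Complex.ofReal_add,
    ← Complex.betaIntegral_eq_Gamma_mul_div _ _ (by simpa) (by simpa), Complex.betaIntegral]
  refine intervalIntegral.integral_congr fun x hx => ?_
  rw [Set.uIcc_of_le zero_le_one] at hx
  push_cast [Complex.ofReal_cpow hx.1, Complex.ofReal_cpow (sub_nonneg.2 hx.2)]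
  rfl

theorem integral_one_sub_rpow_mul_one_add_rpow {a b : ℝ} (ha : -1 < a) (hb : -1 < b) :
    ∫ t in (-1:ℝ)..1, (1 - t) ^ a * (1 + t) ^ b =
      2 ^ (a + b + 1) * (Real.Gamma (a + 1) * Real.Gamma (b + 1) / Real.Gamma (a + b + 2)) := by
  have hsub := intervalIntegral.integral_comp_mul_sub (a := 0) (b := 1)
    (fun t : ℝ => (1 - t) ^ a * (1 + t) ^ b) two_ne_zero 1
  have hscale : EqOn (fun x : ℝ => (1 - (2 * x - 1)) ^ a * (1 + (2 * x - 1)) ^ b)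
      (fun x => 2 ^ a * 2 ^ b * (x ^ (b + 1 - 1) * (1 - x) ^ (a + 1 - 1))) (uIcc 0 1) := by
    intro x hx
    rw [Set.uIcc_of_le zero_le_one] at hx
    simp only [add_sub_cancel_right]
    rw [show 1 - (2 * x - 1) = 2 * (1 - x) by ring, show 1 + (2 * x - 1) = 2 * x by ring,
      Real.mul_rpow zero_le_two (sub_nonneg.2 hx.2), Real.mul_rpow zero_le_two hx.1]
    ring
  rw [intervalIntegral.integral_congr hscale, intervalIntegral.integral_const_mul,
    Real.integral_rpow_mul_one_sub_rpow (by linarith) (by linarith)] at hsub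
  norm_num at hsub
  rw [Real.rpow_add two_pos, Real.rpow_add two_pos, Real.rpow_one,
    show a + b + 2 = b + 1 + (a + 1) by ring]
  linear_combination (-2 : ℝ) * hsub

theorem intervalIntegrable_one_sub_rpow_mul_one_add_rpow {a b : ℝ} (ha : -1 < a) (hb : -1 < b) :
    IntervalIntegrable (fun t => (1 - t) ^ a * (1 + t) ^ b) volume (-1) 1 := by
  refine intervalIntegral.intervalIntegrable_of_integral_ne_zero ?_
  rw [integral_one_sub_rpow_mul_one_add_rpow ha hb]
  have := Real.Gamma_pos_of_pos (show 0 < a + 1 by linarith)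
  have := Real.Gamma_pos_of_pos (show 0 < b + 1 by linarith)
  have := Real.Gamma_pos_of_pos (show 0 < a + b + 2 by linarith)
  positivity

theorem Polynomial.fwdDiff_iter_eval_eq_coeff_mul_factorial {R : Type*} [CommRing R] {p : R[X]}
    {n : ℕ} (hp : p.natDegree ≤ n) (x : R) :
    (fwdDiff 1)^[n] p.eval x = p.coeff n * n ! := by
  rcases hp.lt_or_eq with hlt | rfl
  · rw [fwdDiff_iter_eq_zero_of_degree_lt hlt, coeff_eq_zero_of_natDegree_lt hlt]
    simp
  · rw [fwdDiff_iter_degree_eq_factorial]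
    simp [coeff_natDegree]

theorem Polynomial.sum_range_neg_one_pow_mul_choose_mul_eval {R : Type*} [CommRing R] {p : R[X]}
    {n : ℕ} (hp : p.natDegree ≤ n) :
    ∑ j ∈ range (n + 1), (-1) ^ j * n.choose j * p.eval (j : R) = (-1) ^ n * n ! * p.coeff n := by
  rw [mul_assoc, mul_comm (n ! : R), ← fwdDiff_iter_eval_eq_coeff_mul_factorial hp 0,
    fwdDiff_iter_eq_sum_shift, mul_sum]
  refine sum_congr rfl fun j hj => ?_
  have hsq : ((-1 : R) ^ (n - j)) ^ 2 = 1 := by rw [← pow_mul, pow_mul', neg_one_sq, one_pow]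
  rw [← pow_sub_mul_pow (-1 : R) (Nat.lt_succ_iff.1 (mem_range.1 hj))]
  simp only [zero_add, nsmul_eq_mul, mul_one, zsmul_eq_mul, Int.cast_mul, Int.cast_pow,
    Int.cast_neg, Int.cast_one, Int.cast_natCast]
  linear_combination (-(-1 : R) ^ j * n.choose j * p.eval (j : R)) * hsq

section Orthogonality

variable {μ : Measure ℝ} {f : ℝ → ℝ} {a b r : ℝ} {m : ℕ}

theorem integral_eval_mul_eq_zero_of_degree_lt (hf : IntervalIntegrable f μ a b)
    (h : ∀ i < m, ∫ t in a..b, (t - r) ^ i * f t ∂μ = 0) {q : ℝ[X]} (hq : q.degree < m) :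
    ∫ t in a..b, q.eval t * f t ∂μ = 0 := by
  conv_lhs => rw [← q.sum_taylor_eq r]
  simp only [Polynomial.sum, eval_finsetSum, sum_mul, eval_mul, eval_C, eval_pow,
    eval_sub, eval_X, mul_assoc]
  rw [intervalIntegral.integral_finsetSum fun i _ =>
    (hf.continuousOn_mul (by fun_prop)).const_mul _]
  refine sum_eq_zero fun i hi => ?_
  have him : (i : WithBot ℕ) < m :=
    ((le_degree_of_ne_zero (mem_support_iff.1 hi)).trans_eq (degree_taylor q r)).trans_lt hq
  rw [intervalIntegral.integral_const_mul, h i (WithBot.coe_lt_coe.1 him), mul_zero]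

theorem integral_pow_mul_eq_of_forall_lt_integral_eq_zero (hf : IntervalIntegrable f μ a b)
    (h : ∀ i < m, ∫ t in a..b, (t - r) ^ i * f t ∂μ = 0) :
    ∫ t in a..b, t ^ m * f t ∂μ = ∫ t in a..b, (t - r) ^ m * f t ∂μ := by
  have hdeg : (X ^ m - (X - C r) ^ m : ℝ[X]).degree < m := by
    have hmonic := (monic_X_sub_C r).pow m
    have hlt := degree_sub_lt_left (p := (X ^ m : ℝ[X])) (q := (X - C r) ^ m)
      (by rw [degree_X_pow, degree_pow, degree_X_sub_C, nsmul_one])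
      (pow_ne_zero m X_ne_zero) (by rw [leadingCoeff_X_pow, hmonic.leadingCoeff])
    rwa [degree_X_pow] at hlt
  have h0 := integral_eval_mul_eq_zero_of_degree_lt hf h hdeg
  simp only [eval_sub, eval_pow, eval_X, eval_C, sub_mul] at h0
  rwa [intervalIntegral.integral_sub (hf.continuousOn_mul (by fun_prop))
    (hf.continuousOn_mul (by fun_prop)), sub_eq_zero] at h0

end Orthogonality

noncomputable def jacobiMomentPoly (n k c : ℕ) (α β : ℝ) : ℝ[X] :=
  (ascPochhammer ℝ k).comp (X + C (α + 1)) * (ascPochhammer ℝ c).comp (C (β + n + 1) - X)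

section JacobiMomentPoly

variable (n k c : ℕ) (α β : ℝ)

theorem jacobiMomentPoly_eval (x : ℝ) :
    (jacobiMomentPoly n k c α β).eval x =
      (ascPochhammer ℝ k).eval (α + x + 1) * (ascPochhammer ℝ c).eval (β + n + 1 - x) := by
  simp only [jacobiMomentPoly, eval_mul, eval_comp, eval_add, eval_sub, eval_X, eval_C]
  ring_nf

private theorem natDegree_C_sub_X (a : ℝ) : (C a - X).natDegree = 1 := by
  rw [← neg_sub, natDegree_neg, natDegree_X_sub_C]

private theorem leadingCoeff_C_sub_X (a : ℝ) : (C a - X).leadingCoeff = -1 := by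
  rw [← neg_sub, leadingCoeff_neg, leadingCoeff_X_sub_C]

theorem natDegree_jacobiMomentPoly_le : (jacobiMomentPoly n k c α β).natDegree ≤ k + c := by
  refine natDegree_mul_le_of_le ?_ ?_ <;>
  simp only [natDegree_comp, ascPochhammer_natDegree, natDegree_X_add_C, natDegree_C_sub_X,
    mul_one, le_refl]

theorem coeff_jacobiMomentPoly_add : (jacobiMomentPoly n k c α β).coeff (k + c) = (-1) ^ c := by
  have h := coeff_mul_degree_add_degree ((ascPochhammer ℝ k).comp (X + C (α + 1)))
    ((ascPochhammer ℝ c).comp (C (β + n + 1) - X))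
  simp only [natDegree_comp, ascPochhammer_natDegree, natDegree_X_add_C, natDegree_C_sub_X,
    mul_one] at h
  rw [jacobiMomentPoly, h, leadingCoeff_comp (by rw [natDegree_X_add_C]; exact one_ne_zero),
    leadingCoeff_comp (by rw [natDegree_C_sub_X]; exact one_ne_zero), leadingCoeff_X_add_C,
    leadingCoeff_C_sub_X, (monic_ascPochhammer ℝ k).leadingCoeff,
    (monic_ascPochhammer ℝ c).leadingCoeff]
  simp only [ascPochhammer_natDegree, one_pow, one_mul]

end JacobiMomentPoly

theorem gbinomR_mul_gbinomR_mul_Gamma_mul_Gamma {n k c j : ℕ} {α β : ℝ} (hα : ∀ m : ℤ, α ≠ m)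
    (hβ : -1 < β) (hj : j ≤ n) :
    gbinomR (n + α) (n - j) * gbinomR (n + β) j *
        (Real.Gamma (α + k + j + 1) * Real.Gamma (β + c + (n - j : ℕ) + 1)) =
      Real.Gamma (α + n + 1) * Real.Gamma (β + n + 1) / n ! *
        (n.choose j * (jacobiMomentPoly n k c α β).eval (j : ℝ)) := by
  have hnj : ((n - j : ℕ) : ℝ) = n - j := Nat.cast_sub hj
  have hx : ∀ i : ℕ, α + j + 1 ≠ -i := fun i h => hα (-(j + 1 + i)) (by push_cast; linarith)
  have hy : ∀ i : ℕ, β + (n - j) + 1 ≠ -i := fun i h => by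
    have : (j : ℝ) ≤ n := Nat.cast_le.2 hj
    have : (0 : ℝ) ≤ i := Nat.cast_nonneg _
    linarith
  have hb1 : gbinomR (n + α) (n - j) =
      Real.Gamma (α + n + 1) / ((n - j)! * Real.Gamma (α + j + 1)) := by
    rw [gbinomR_eq_Gamma_div (by rwa [hnj, show (n : ℝ) + α - (n - j) + 1 = α + j + 1 by ring]),
      hnj, show (n : ℝ) + α - (n - j) + 1 = α + j + 1 by ring, add_comm (n : ℝ) α]
  have hb2 : gbinomR (n + β) j = Real.Gamma (β + n + 1) / (j ! * Real.Gamma (β + (n - j) + 1)) := by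
    rw [gbinomR_eq_Gamma_div (by rwa [show (n : ℝ) + β - j + 1 = β + (n - j) + 1 by ring]),
      show (n : ℝ) + β - j + 1 = β + (n - j) + 1 by ring, add_comm (n : ℝ) β]
  have hΓ1 : Real.Gamma (α + k + j + 1) =
      Real.Gamma (α + j + 1) * (ascPochhammer ℝ k).eval (α + j + 1) := by
    rw [← Real.Gamma_add_nat_eq_mul_ascPochhammer hx]; ring_nf
  have hΓ2 : Real.Gamma (β + c + (n - j) + 1) =
      Real.Gamma (β + (n - j) + 1) * (ascPochhammer ℝ c).eval (β + (n - j) + 1) := by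
    rw [← Real.Gamma_add_nat_eq_mul_ascPochhammer hy]; ring_nf
  rw [hb1, hb2, hnj, hΓ1, hΓ2, jacobiMomentPoly_eval, Nat.cast_choose ℝ hj,
    show β + n + 1 - j = β + (n - j) + 1 by ring]
  field_simp [Real.Gamma_ne_zero hx, Real.Gamma_ne_zero hy]

theorem jacobiR_eval (n : ℕ) (α β t : ℝ) :
    (jacobiR n α β).eval t = 2⁻¹ ^ n * ∑ j ∈ range (n + 1),
      gbinomR (n + α) (n - j) * gbinomR (n + β) j * (t - 1) ^ j * (t + 1) ^ (n - j) := by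
  simp [jacobiR, eval_finsetSum]

theorem integral_one_add_pow_mul_jacobiR_eq_sum {n k c : ℕ} {α β : ℝ} (hak : -1 < α + k)
    (hβ : -1 < β) :
    ∫ t in (-1:ℝ)..1, (t + 1) ^ c * ((jacobiR n α β).eval t * ((1 - t) ^ (α + k) * (1 + t) ^ β)) =
      2⁻¹ ^ n * (2 ^ (α + k + β + c + n + 1) / Real.Gamma (α + k + β + c + n + 2)) *
        ∑ j ∈ range (n + 1), (-1) ^ j * (gbinomR (n + α) (n - j) * gbinomR (n + β) j *
          (Real.Gamma (α + k + j + 1) * Real.Gamma (β + c + (n - j : ℕ) + 1))) := by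
  have ha (j : ℕ) : -1 < α + k + j := by linarith [(Nat.cast_nonneg j : (0 : ℝ) ≤ j)]
  have hb (j : ℕ) : -1 < β + c + (n - j : ℕ) := by
    linarith [(Nat.cast_nonneg c : (0 : ℝ) ≤ c), (Nat.cast_nonneg (n - j) : (0 : ℝ) ≤ (n - j : ℕ))]
  set K : ℕ → ℝ := fun j => 2⁻¹ ^ n * (-1) ^ j * (gbinomR (n + α) (n - j) * gbinomR (n + β) j)
  calc _ = ∫ t in (-1:ℝ)..1, ∑ j ∈ range (n + 1),
        K j * ((1 - t) ^ (α + k + j) * (1 + t) ^ (β + c + (n - j : ℕ))) := by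
        refine intervalIntegral.integral_congr_Ioo_of_le (by norm_num) fun t ht => ?_
        have h1t : 0 < 1 - t := by linarith [ht.2]
        have h2t : 0 < 1 + t := by linarith [ht.1]
        simp only [jacobiR_eval, mul_sum, sum_mul, Real.rpow_add h1t, Real.rpow_add h2t,
          Real.rpow_natCast]
        refine sum_congr rfl fun j _ => ?_
        rw [show t - 1 = -(1 - t) by ring, neg_pow, add_comm t 1]
        ring
    _ = ∑ j ∈ range (n + 1),
        K j * ∫ t in (-1:ℝ)..1, (1 - t) ^ (α + k + j) * (1 + t) ^ (β + c + (n - j : ℕ)) := by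
        rw [intervalIntegral.integral_finsetSum fun j _ =>
          (intervalIntegrable_one_sub_rpow_mul_one_add_rpow (ha j) (hb j)).const_mul _]
        simp only [intervalIntegral.integral_const_mul]
    _ = _ := by
        rw [mul_sum]
        refine sum_congr rfl fun j hj => ?_
        have hnj : ((n - j : ℕ) : ℝ) = n - j := Nat.cast_sub (Nat.lt_succ_iff.1 (mem_range.1 hj))
        rw [integral_one_sub_rpow_mul_one_add_rpow (ha j) (hb j)]
        rw [show α + k + j + (β + c + (n - j : ℕ)) = α + k + β + c + n by rw [hnj]; ring]
        ring

theorem exists_integral_one_add_pow_mul_jacobiR_eq_mul_coeff {n k c : ℕ} {α β : ℝ}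
    (hα : ∀ m : ℤ, α ≠ m) (hβ : -1 < β) (hak : -1 < α + k) (hkc : k + c ≤ n) :
    ∃ E ≠ 0, ∫ t in (-1:ℝ)..1,
        (t + 1) ^ c * ((jacobiR n α β).eval t * ((1 - t) ^ (α + k) * (1 + t) ^ β)) =
      E * (jacobiMomentPoly n k c α β).coeff n := by
  have hsum : ∑ j ∈ range (n + 1), (-1) ^ j * (gbinomR (n + α) (n - j) * gbinomR (n + β) j *
      (Real.Gamma (α + k + j + 1) * Real.Gamma (β + c + (n - j : ℕ) + 1))) =
      Real.Gamma (α + n + 1) * Real.Gamma (β + n + 1) / n ! *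
        ((-1) ^ n * n ! * (jacobiMomentPoly n k c α β).coeff n) := by
    rw [← sum_range_neg_one_pow_mul_choose_mul_eval
      ((natDegree_jacobiMomentPoly_le n k c α β).trans hkc), mul_sum]
    refine sum_congr rfl fun j hj => ?_
    rw [gbinomR_mul_gbinomR_mul_Gamma_mul_Gamma hα hβ (Nat.lt_succ_iff.1 (mem_range.1 hj))]
    ring
  have hS : 0 < α + k + β + c + n + 2 := by
    linarith [(Nat.cast_nonneg c : (0 : ℝ) ≤ c), (Nat.cast_nonneg n : (0 : ℝ) ≤ n)]
  have hαn : Real.Gamma (α + n + 1) ≠ 0 :=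
    Real.Gamma_ne_zero fun i h => hα (-(n + 1 + i)) (by push_cast; linarith)
  have hβn := Real.Gamma_pos_of_pos (show 0 < β + n + 1 by
    linarith [(Nat.cast_nonneg n : (0 : ℝ) ≤ n)])
  refine ⟨2⁻¹ ^ n * (2 ^ (α + k + β + c + n + 1) / Real.Gamma (α + k + β + c + n + 2)) *
    (Real.Gamma (α + n + 1) * Real.Gamma (β + n + 1) / n ! * ((-1) ^ n * n !)), ?_, ?_⟩
  · have := Real.Gamma_pos_of_pos hS
    have := Nat.factorial_pos n
    positivity
  · rw [integral_one_add_pow_mul_jacobiR_eq_sum hak hβ, hsum]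
    ring

theorem jacobi_quasiorthogonality_general (n k : ℕ) (α β : ℝ) (hβ : -1 < β)
    (hα1 : -(n : ℝ) < α) (hαZ : ¬∃ m : ℤ, α = m)
    (hk : (k : ℤ) = ⌊-α⌋) :
    (∀ q : Polynomial ℝ, q.degree < (n - k : ℕ) →
      (∫ t in (-1:ℝ)..1,
        q.eval t * (jacobiR n α β).eval t * (1 - t) ^ (α + k) * (1 + t) ^ β) = 0) ∧
    (∫ t in (-1:ℝ)..1,
        t ^ (n - k) * (jacobiR n α β).eval t * (1 - t) ^ (α + k) * (1 + t) ^ β) ≠ 0 := by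
  have hα : ∀ m : ℤ, α ≠ m := fun m h => hαZ ⟨m, h⟩
  have hk_le : (k : ℝ) ≤ -α := by exact_mod_cast hk ▸ Int.floor_le (-α)
  have hk_gt : -α < k + 1 := by exact_mod_cast hk ▸ Int.lt_floor_add_one (-α)
  have hak : -1 < α + k := by linarith
  have hkn : k ≤ n := by exact_mod_cast (show (k : ℝ) ≤ n by linarith)
  set f : ℝ → ℝ := fun t => (jacobiR n α β).eval t * ((1 - t) ^ (α + k) * (1 + t) ^ β)
  have hf : IntervalIntegrable f volume (-1) 1 :=
    (intervalIntegrable_one_sub_rpow_mul_one_add_rpow hak hβ).continuousOn_mul (by fun_prop)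
  have hmoment (c : ℕ) (hc : k + c ≤ n) : ∃ E ≠ 0,
      ∫ t in (-1:ℝ)..1, (t - -1) ^ c * f t = E * (jacobiMomentPoly n k c α β).coeff n := by
    simpa only [sub_neg_eq_add] using
      exists_integral_one_add_pow_mul_jacobiR_eq_mul_coeff hα hβ hak hc
  have horth : ∀ i < n - k, ∫ t in (-1:ℝ)..1, (t - -1) ^ i * f t = 0 := fun i hi => by
    obtain ⟨E, -, hE⟩ := hmoment i (by omega)
    rw [hE, coeff_eq_zero_of_natDegree_lt
      ((natDegree_jacobiMomentPoly_le n k i α β).trans_lt (by omega)), mul_zero]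
  refine ⟨fun q hq => ?_, ?_⟩
  · simpa only [mul_assoc] using integral_eval_mul_eq_zero_of_degree_lt hf horth hq
  · obtain ⟨E, hE0, hE⟩ := hmoment (n - k) (by omega)
    have htop := coeff_jacobiMomentPoly_add n k (n - k) α β
    rw [Nat.add_sub_cancel' hkn] at htop
    simp only [mul_assoc]
    rw [integral_pow_mul_eq_of_forall_lt_integral_eq_zero hf horth, hE, htop]
    exact mul_ne_zero hE0 (pow_ne_zero _ (by norm_num))

/-- Quasi-orthogonality on `[-1,1]`: for `β > -1`, `-n < α < -1`, `α ∉ ℤ`, `k = ⌊-α⌋`,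
the polynomial `P_n^{(α,β)}` is orthogonal to all polynomials of degree `≤ n-k-1` with
respect to the modified weight `(1-t)^{α+k} (1+t)^β`, and not orthogonal to `t^{n-k}`. -/
theorem jacobi_quasiorthogonality (n k : ℕ) (α β : ℝ) (hβ : -1 < β)
    (hα1 : -(n : ℝ) < α) (hα2 : α < -1) (hαZ : ¬∃ m : ℤ, α = m)
    (hk : (k : ℤ) = ⌊-α⌋) :
    (∀ q : Polynomial ℝ, q.degree < (n - k : ℕ) →
      (∫ t in (-1:ℝ)..1,
        q.eval t * (jacobiR n α β).eval t * (1 - t) ^ (α + k) * (1 + t) ^ β) = 0) ∧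
    (∫ t in (-1:ℝ)..1,
        t ^ (n - k) * (jacobiR n α β).eval t * (1 - t) ^ (α + k) * (1 + t) ^ β) ≠ 0 :=
  jacobi_quasiorthogonality_general n k α β hβ hα1 hαZ hk
end

section
/- For real α, β with -n < α < -1, -n < β < -1, α + β + n > -1 and α, β, α+β ∉ ℤ, the Jacobi polynomial P_n^{(α,β)} has at least n - ⌊-α⌋ - ⌊-β⌋ distinct zeros in the open interval (-1, 1). -/
open Finset Polynomial

open MeasureTheory Set Filter


noncomputable def pochR (x : ℝ) (m : ℕ) : ℝ := ∏ i ∈ Finset.range m, (x + i)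

lemma pochR_zero (x : ℝ) : pochR x 0 = 1 := by simp [pochR]

lemma pochR_succ (x : ℝ) (m : ℕ) : pochR x (m+1) = pochR x m * (x + m) := by
  simp [pochR, Finset.prod_range_succ]

lemma pochR_add (x : ℝ) (m l : ℕ) : pochR x (m + l) = pochR x m * pochR (x + m) l := by
  induction l with
  | zero => simp [pochR_zero]
  | succ l ih =>
    rw [← Nat.add_assoc, pochR_succ, ih, pochR_succ, mul_assoc]
    push_cast; ring_nf

lemma pochR_pos {x : ℝ} (hx : 0 < x) (m : ℕ) : 0 < pochR x m := by
  apply Finset.prod_pos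
  intro i _
  positivity

lemma pochR_ne_zero {x : ℝ} (hx : ∀ j : ℤ, x ≠ j) (m : ℕ) : pochR x m ≠ 0 := by
  apply Finset.prod_ne_zero_iff.2
  intro i _
  intro h0
  exact hx (-i) (by push_cast; linarith)

/-- n-th finite difference of a polynomial of degree < n vanishes. -/
lemma alt_sum_choose_eval : ∀ (n : ℕ), 0 < n → ∀ (p : Polynomial ℝ), p.natDegree < n →
    ∑ j ∈ range (n+1), (-1:ℝ)^j * (n.choose j) * p.eval (j : ℝ) = 0 := by
  intro n
  induction n with
  | zero => omega
  | succ n ih =>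
    intro _ p hp
    rcases Nat.eq_zero_or_pos n with hn | hn
    · subst hn
      have h0 : p.natDegree = 0 := by omega
      obtain ⟨c, rfl⟩ := Polynomial.natDegree_eq_zero.1 h0
      simp [Finset.sum_range_succ]
    · -- inductive step
      set q : Polynomial ℝ := p - p.comp (X + 1) with hqdef
      have hq : q.natDegree < n := by
        rcases Nat.eq_zero_or_pos p.natDegree with hd0 | hd0
        · obtain ⟨c, rfl⟩ := Polynomial.natDegree_eq_zero.1 hd0
          have : q = 0 := by simp [hqdef]
          rw [this]; simpa using hn
        · have hp0 : p ≠ 0 := fun h => by simp [h] at hd0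
          have hX1 : ((X + 1 : Polynomial ℝ)).natDegree = 1 := by
            simpa using Polynomial.natDegree_X_add_C (1:ℝ)
          have hnd : (p.comp (X + 1)).natDegree = p.natDegree := by
            rw [Polynomial.natDegree_comp, hX1, mul_one]
          have hlc : (p.comp (X + 1)).leadingCoeff = p.leadingCoeff := by
            rw [Polynomial.leadingCoeff_comp (by rw [hX1]; omega)]
            have : ((X + 1 : Polynomial ℝ)).leadingCoeff = 1 := by
              simpa using Polynomial.leadingCoeff_X_add_C (1:ℝ)
            rw [this, one_pow, mul_one]
          have hcomp0 : p.comp (X + 1) ≠ 0 := by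
            intro h
            apply hp0
            have := hlc
            rw [h, Polynomial.leadingCoeff_zero] at this
            exact Polynomial.leadingCoeff_eq_zero.1 this.symm
          have hdeg : q.degree < p.degree := by
            apply Polynomial.degree_sub_lt _ hp0 hlc.symm
            rw [Polynomial.degree_eq_natDegree hp0, Polynomial.degree_eq_natDegree hcomp0, hnd]
          rcases eq_or_ne q 0 with h | h
          · rw [h]; simpa using hn
          · have := Polynomial.natDegree_lt_natDegree h hdeg
            omega
      have key : ∑ j ∈ range (n+1+1), (-1:ℝ)^j * ((n+1).choose j) * p.eval (j:ℝ)
          = ∑ j ∈ range (n+1), (-1:ℝ)^j * (n.choose j) * q.eval (j:ℝ) := by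
        have expand : ∀ j : ℕ, q.eval (j:ℝ) = p.eval (j:ℝ) - p.eval ((j:ℝ)+1) := by
          intro j
          simp [hqdef, Polynomial.eval_comp]
        rw [Finset.sum_range_succ' (fun j => (-1:ℝ)^j * ((n+1).choose j) * p.eval (j:ℝ))]
        have split : ∀ j ∈ range (n+1),
            (-1:ℝ)^(j+1) * ((n+1).choose (j+1)) * p.eval ((j+1:ℕ):ℝ)
            = (-1:ℝ)^(j+1) * (n.choose (j+1)) * p.eval ((j+1:ℕ):ℝ)
              - (-1:ℝ)^j * (n.choose j) * p.eval ((j:ℝ)+1) := by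
          intro j _
          have : ((n+1).choose (j+1) : ℝ) = (n.choose j : ℝ) + (n.choose (j+1) : ℝ) := by
            rw [← Nat.cast_add, ← Nat.choose_succ_succ]
          rw [this]
          push_cast
          ring
        rw [Finset.sum_congr rfl split, Finset.sum_sub_distrib]
        have h00 : (((n+1).choose 0 : ℕ) : ℝ) = ((n.choose 0 : ℕ) : ℝ) := by norm_num
        have reassemble : (∑ j ∈ range (n+1), (-1:ℝ)^(j+1) * (n.choose (j+1)) * p.eval ((j+1:ℕ):ℝ))
            + (-1:ℝ)^0 * (n.choose 0) * p.eval ((0:ℕ):ℝ)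
            = ∑ j ∈ range (n+1), (-1:ℝ)^j * (n.choose j) * p.eval (j:ℝ) := by
          have h2 : (∑ j ∈ range (n+1+1), (-1:ℝ)^j * (n.choose j) * p.eval (j:ℝ))
              = (∑ j ∈ range (n+1), (-1:ℝ)^(j+1) * (n.choose (j+1)) * p.eval ((j+1:ℕ):ℝ))
                + (-1:ℝ)^0 * (n.choose 0) * p.eval ((0:ℕ):ℝ) :=
            Finset.sum_range_succ' _ (n+1)
          rw [← h2, Finset.sum_range_succ]
          simp [Nat.choose_eq_zero_of_lt (Nat.lt_succ_self n)]
        have final : ∑ j ∈ range (n+1), (-1:ℝ)^j * (n.choose j) * q.eval (j:ℝ)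
            = (∑ j ∈ range (n+1), (-1:ℝ)^j * (n.choose j) * p.eval (j:ℝ))
              - ∑ j ∈ range (n+1), (-1:ℝ)^j * (n.choose j) * p.eval ((j:ℝ)+1) := by
          rw [← Finset.sum_sub_distrib]
          apply Finset.sum_congr rfl
          intro j _
          rw [expand j]; ring
        rw [h00]
        linarith [reassemble, final]
      rw [key]
      exact ih hn q hq

lemma gbinomR_eq_pochR (x : ℝ) (m : ℕ) :
    gbinomR x m = pochR (x - m + 1) m / (Nat.factorial m) := by
  unfold gbinomR pochR
  congr 1
  rw [← Finset.prod_range_reflect (fun i => x - (i:ℝ)) m]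
  apply Finset.prod_congr rfl
  intro i hi
  rw [Finset.mem_range] at hi
  have h1 : ((m - 1 - i : ℕ) : ℝ) = (m:ℝ) - 1 - i := by
    have : m - 1 - i = m - (1 + i) := by omega
    rw [this, Nat.cast_sub (by omega)]
    push_cast; ring
  rw [h1]; ring



lemma integrableOn_weight_Icc {pe qe : ℝ} (hp : -1 < pe) (hq : -1 < qe) :
    IntegrableOn (fun t => (1 - t) ^ pe * (1 + t) ^ qe) (Set.Icc (-1:ℝ) 1) := by
  have left : IntegrableOn (fun t => (1 - t) ^ pe * (1 + t) ^ qe) (Set.Icc (-1:ℝ) 0) := by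
    have h1 : IntervalIntegrable (fun x : ℝ => x ^ qe) volume 0 1 := intervalIntegral.intervalIntegrable_rpow' hq
    have h2 : IntervalIntegrable (fun x : ℝ => (x + 1) ^ qe) volume (-1) 0 := by
      simpa using h1.comp_add_right 1
    have h3 : IntegrableOn (fun x : ℝ => (x + 1) ^ qe) (Set.Ioc (-1:ℝ) 0) := h2.1
    have h4 : IntegrableOn (fun x : ℝ => (x + 1) ^ qe) (Set.Icc (-1:ℝ) 0) :=
      (integrableOn_Icc_iff_integrableOn_Ioc).2 h3
    have h5 : ContinuousOn (fun t : ℝ => (1 - t) ^ pe) (Set.Icc (-1:ℝ) 0) := by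
      apply ContinuousOn.rpow_const
      · exact continuousOn_const.sub continuousOn_id
      · intro x hx
        left
        have := hx.2
        intro h0; linarith [h0]
    have := MeasureTheory.IntegrableOn.continuousOn_mul h5 h4 isCompact_Icc
    exact this.congr_fun (fun x _ => by simp [add_comm]) measurableSet_Icc
  have right : IntegrableOn (fun t => (1 - t) ^ pe * (1 + t) ^ qe) (Set.Icc (0:ℝ) 1) := by
    have h1 : IntervalIntegrable (fun x : ℝ => x ^ pe) volume 0 1 := intervalIntegral.intervalIntegrable_rpow' hp
    have h2 : IntervalIntegrable (fun x : ℝ => (1 - x) ^ pe) volume 1 0 := by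
      simpa using h1.comp_sub_left 1
    have h3 : IntegrableOn (fun x : ℝ => (1 - x) ^ pe) (Set.Ioc (0:ℝ) 1) := h2.symm.1
    have h4 : IntegrableOn (fun x : ℝ => (1 - x) ^ pe) (Set.Icc (0:ℝ) 1) :=
      (integrableOn_Icc_iff_integrableOn_Ioc).2 h3
    have h5 : ContinuousOn (fun t : ℝ => (1 + t) ^ qe) (Set.Icc (0:ℝ) 1) := by
      apply ContinuousOn.rpow_const
      · exact continuousOn_const.add continuousOn_id
      · intro x hx
        left
        have := hx.1
        intro h0; linarith [h0]
    exact MeasureTheory.IntegrableOn.mul_continuousOn h4 h5 isCompact_Icc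
  have hunion := left.union right
  apply hunion.mono_set
  rw [Set.Icc_union_Icc_eq_Icc (by norm_num : (-1:ℝ) ≤ 0) (by norm_num : (0:ℝ) ≤ 1)]

lemma integrableOn_weight {pe qe : ℝ} (hp : -1 < pe) (hq : -1 < qe) :
    IntegrableOn (fun t => (1 - t) ^ pe * (1 + t) ^ qe) (Set.Ioo (-1:ℝ) 1) :=
  (integrableOn_weight_Icc hp hq).mono_set Set.Ioo_subset_Icc_self

lemma integrableOn_poly_weight {pe qe : ℝ} (hp : -1 < pe) (hq : -1 < qe) (P : Polynomial ℝ) :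
    IntegrableOn (fun t => P.eval t * ((1 - t) ^ pe * (1 + t) ^ qe)) (Set.Ioo (-1:ℝ) 1) := by
  have h := MeasureTheory.IntegrableOn.continuousOn_mul
    (P.continuous_aeval.continuousOn : ContinuousOn (fun t : ℝ => P.eval t) (Set.Icc (-1:ℝ) 1))
    (integrableOn_weight_Icc hp hq) isCompact_Icc
  exact h.mono_set Set.Ioo_subset_Icc_self

noncomputable def Mom (pe qe : ℝ) : ℝ := ∫ t in Set.Ioo (-1:ℝ) 1, (1 - t) ^ pe * (1 + t) ^ qe

lemma Mom_rec {pe qe : ℝ} (hp : -1 < pe) (hq : -1 < qe) :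
    (qe+1) * Mom (pe+1) qe = (pe+1) * Mom pe (qe+1) := by
  set F : ℝ → ℝ := fun t => (1 - t)^(pe+1) * (1 + t)^(qe+1) with hF
  set g : ℝ → ℝ := fun t => (qe+1) * ((1-t)^(pe+1) * (1+t)^qe)
      - (pe+1) * ((1-t)^pe * (1+t)^(qe+1)) with hg
  have hw1 : IntegrableOn (fun t : ℝ => (1-t)^(pe+1) * (1+t)^qe) (Set.Ioo (-1:ℝ) 1) :=
    integrableOn_weight (by linarith) hq
  have hw2 : IntegrableOn (fun t : ℝ => (1-t)^pe * (1+t)^(qe+1)) (Set.Ioo (-1:ℝ) 1) :=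
    integrableOn_weight hp (by linarith)
  have hgint : IntegrableOn g (Set.Ioo (-1:ℝ) 1) := by
    exact (hw1.const_mul _).sub (hw2.const_mul _)
  have hderiv : ∀ t ∈ Set.Ioo (-1:ℝ) 1, HasDerivAt F (g t) t := by
    intro t ht
    have h1t : (0:ℝ) < 1 - t := by linarith [ht.2]
    have h2t : (0:ℝ) < 1 + t := by linarith [ht.1]
    have base1 : HasDerivAt (fun y : ℝ => y ^ (pe+1)) ((pe+1) * (1-t)^pe) (1-t) := by
      simpa using Real.hasDerivAt_rpow_const (x := 1-t) (p := pe+1) (Or.inl h1t.ne')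
    have lin1 : HasDerivAt (fun t : ℝ => 1 - t) (-1) t := (hasDerivAt_id t).const_sub 1
    have d1 : HasDerivAt (fun t : ℝ => (1 - t)^(pe+1)) (-((pe+1) * (1-t)^pe)) t := by
      have := base1.comp t lin1
      simpa [Function.comp_def] using this
    have base2 : HasDerivAt (fun y : ℝ => y ^ (qe+1)) ((qe+1) * (1+t)^qe) (1+t) := by
      simpa using Real.hasDerivAt_rpow_const (x := 1+t) (p := qe+1) (Or.inl h2t.ne')
    have lin2 : HasDerivAt (fun t : ℝ => 1 + t) 1 t := (hasDerivAt_id t).const_add 1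
    have d2 : HasDerivAt (fun t : ℝ => (1 + t)^(qe+1)) ((qe+1) * (1+t)^qe) t := by
      have := base2.comp t lin2
      simpa [Function.comp_def] using this
    have := d1.mul d2
    convert this using 1
    show (qe+1) * ((1-t)^(pe+1) * (1+t)^qe) - (pe+1) * ((1-t)^pe * (1+t)^(qe+1)) = _
    have e1 : (1-t)^(pe+1) = (1-t)^pe * (1-t) := by
      rw [← Real.rpow_add_one h1t.ne' pe]
    have e2 : (1+t)^(qe+1) = (1+t)^qe * (1+t) := by
      rw [← Real.rpow_add_one h2t.ne' qe]
    rw [e1, e2]; ring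
    all_goals rfl
  have ha : Tendsto F (nhdsWithin (-1:ℝ) (Set.Ioi (-1:ℝ))) (nhds 0) := by
    have l1 : Tendsto (fun t : ℝ => (1 - t)^(pe+1)) (nhdsWithin (-1:ℝ) (Set.Ioi (-1:ℝ)))
        (nhds ((2:ℝ)^(pe+1))) := by
      have hc : ContinuousAt (fun t : ℝ => (1 - t)^(pe+1)) (-1) := by
        apply ContinuousAt.rpow_const
        · exact (continuous_const.sub continuous_id).continuousAt
        · left; norm_num
      have := hc.tendsto.mono_left (nhdsWithin_le_nhds (s := Set.Ioi (-1:ℝ)))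
      convert this using 2 <;> norm_num
    have l2 : Tendsto (fun t : ℝ => (1 + t)^(qe+1)) (nhdsWithin (-1:ℝ) (Set.Ioi (-1:ℝ)))
        (nhds 0) := by
      have hc : ContinuousAt (fun y : ℝ => y ^ (qe+1)) 0 :=
        Real.continuousAt_rpow_const 0 (qe+1) (Or.inr (by linarith))
      have lc : Tendsto (fun t : ℝ => 1 + t) (nhdsWithin (-1:ℝ) (Set.Ioi (-1:ℝ))) (nhds 0) := by
        have hcont : Continuous (fun t : ℝ => 1 + t) := by continuity
        have h2 := (hcont.tendsto (-1:ℝ)).mono_left (nhdsWithin_le_nhds (s := Set.Ioi (-1:ℝ)))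
        have e : (0:ℝ) = 1 + (-1) := by norm_num
        rw [e]; exact h2
      have := hc.tendsto.comp lc
      simpa [Function.comp_def, Real.zero_rpow (by linarith : qe + 1 ≠ 0)] using this
    have := l1.mul l2
    simpa using this
  have hb : Tendsto F (nhdsWithin (1:ℝ) (Set.Iio (1:ℝ))) (nhds 0) := by
    have l1 : Tendsto (fun t : ℝ => (1 + t)^(qe+1)) (nhdsWithin (1:ℝ) (Set.Iio (1:ℝ)))
        (nhds ((2:ℝ)^(qe+1))) := by
      have hc : ContinuousAt (fun t : ℝ => (1 + t)^(qe+1)) 1 := by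
        apply ContinuousAt.rpow_const
        · exact (continuous_const.add continuous_id).continuousAt
        · left; norm_num
      have := hc.tendsto.mono_left (nhdsWithin_le_nhds (s := Set.Iio (1:ℝ)))
      convert this using 2 <;> norm_num
    have l2 : Tendsto (fun t : ℝ => (1 - t)^(pe+1)) (nhdsWithin (1:ℝ) (Set.Iio (1:ℝ)))
        (nhds 0) := by
      have hc : ContinuousAt (fun y : ℝ => y ^ (pe+1)) 0 :=
        Real.continuousAt_rpow_const 0 (pe+1) (Or.inr (by linarith))
      have lc : Tendsto (fun t : ℝ => 1 - t) (nhdsWithin (1:ℝ) (Set.Iio (1:ℝ))) (nhds 0) := by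
        have hcont : Continuous (fun t : ℝ => 1 - t) := by continuity
        have h2 := (hcont.tendsto (1:ℝ)).mono_left (nhdsWithin_le_nhds (s := Set.Iio (1:ℝ)))
        have e : (0:ℝ) = 1 - 1 := by norm_num
        rw [e]; exact h2
      have := hc.tendsto.comp lc
      simpa [Function.comp_def, Real.zero_rpow (by linarith : pe + 1 ≠ 0)] using this
    have := l2.mul l1
    simpa using this
  have hgii : IntervalIntegrable g volume (-1) 1 := by
    rw [intervalIntegrable_iff_integrableOn_Ioc_of_le (by norm_num : (-1:ℝ) ≤ 1)]
    rw [integrableOn_Ioc_iff_integrableOn_Ioo]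
    exact hgint
  have key := intervalIntegral.integral_eq_sub_of_hasDerivAt_of_tendsto
    (by norm_num : (-1:ℝ) < 1) hderiv hgii ha hb
  rw [intervalIntegral.integral_of_le (by norm_num : (-1:ℝ) ≤ 1),
    MeasureTheory.integral_Ioc_eq_integral_Ioo] at key
  have split : ∫ t in Set.Ioo (-1:ℝ) 1, g t
      = (qe+1) * Mom (pe+1) qe - (pe+1) * Mom pe (qe+1) := by
    rw [hg]
    rw [MeasureTheory.integral_sub (hw1.const_mul _) (hw2.const_mul _)]
    unfold Mom
    rw [MeasureTheory.integral_const_mul, MeasureTheory.integral_const_mul]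
  rw [split] at key
  linarith [key]

set_option maxHeartbeats 1000000 in
lemma sum_identity (n a b k : ℕ) (α β : ℝ) (hα : ∀ m : ℤ, α ≠ m) (hβ : ∀ m : ℤ, β ≠ m)
    (h : a + b + k + 1 ≤ n) :
    ∑ j ∈ range (n+1), gbinomR ((n:ℝ)+α) (n-j) * gbinomR ((n:ℝ)+β) j * (-1:ℝ)^j *
      pochR (α+(a:ℝ)+1) (k+j) * pochR (β+(b:ℝ)+1) (n-j) = 0 := by
  have hα1 : ∀ m : ℤ, α + 1 ≠ m := fun m hm => hα (m - 1) (by push_cast; linarith)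
  have hβ1 : ∀ m : ℤ, β + 1 ≠ m := fun m hm => hβ (m - 1) (by push_cast; linarith)
  have hAne : ∀ m, pochR (α+1) m ≠ 0 := fun m => pochR_ne_zero hα1 m
  have hBne : ∀ m, pochR (β+1) m ≠ 0 := fun m => pochR_ne_zero hβ1 m
  set p : Polynomial ℝ := (∏ i ∈ range (a+k), (Polynomial.C (α+1+i) + Polynomial.X)) *
      (∏ i ∈ range b, (Polynomial.C (β+(n:ℝ)+1+i) - Polynomial.X)) with hp
  have hpdeg : p.natDegree < n := by
    have h1 : (∏ i ∈ range (a+k), (Polynomial.C (α+1+(i:ℝ)) + Polynomial.X)).natDegree ≤ a+k := by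
      apply le_trans (Polynomial.natDegree_prod_le _ _)
      apply le_trans (Finset.sum_le_card_nsmul _ _ 1 ?_)
      · simp
      · intro i _
        have hcomm : Polynomial.C (α+1+(i:ℝ)) + Polynomial.X
            = Polynomial.X + Polynomial.C (α+1+(i:ℝ)) := add_comm _ _
        rw [hcomm, Polynomial.natDegree_X_add_C]
    have h2 : (∏ i ∈ range b, (Polynomial.C (β+(n:ℝ)+1+(i:ℝ)) - Polynomial.X)).natDegree ≤ b := by
      apply le_trans (Polynomial.natDegree_prod_le _ _)
      apply le_trans (Finset.sum_le_card_nsmul _ _ 1 ?_)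
      · simp
      · intro i _
        have hneg : Polynomial.C (β+(n:ℝ)+1+(i:ℝ)) - Polynomial.X
            = -(Polynomial.X - Polynomial.C (β+(n:ℝ)+1+(i:ℝ))) := by ring
        rw [hneg, Polynomial.natDegree_neg, Polynomial.natDegree_X_sub_C]
    have h3 : p.natDegree ≤ (a+k) + b := by
      rw [hp]
      exact le_trans (Polynomial.natDegree_mul_le) (add_le_add h1 h2)
    omega
  have hn0 : 0 < n := by omega
  have key : ∀ j ∈ range (n+1),
      gbinomR ((n:ℝ)+α) (n-j) * gbinomR ((n:ℝ)+β) j * (-1:ℝ)^j *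
        pochR (α+(a:ℝ)+1) (k+j) * pochR (β+(b:ℝ)+1) (n-j)
      = (pochR (α+1) n * pochR (β+1) n / (pochR (α+1) a * pochR (β+1) b * (Nat.factorial n)))
        * ((-1:ℝ)^j * (n.choose j) * p.eval (j:ℝ)) := by
    intro j hj
    rw [Finset.mem_range] at hj
    have hj' : j ≤ n := by omega
    have hcast : ((n - j : ℕ) : ℝ) = (n:ℝ) - j := by
      rw [Nat.cast_sub hj']
    have hg1 : gbinomR ((n:ℝ)+α) (n-j) = pochR (α+1+j) (n-j) / (Nat.factorial (n-j)) := by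
      have harg : (n:ℝ)+α - ((n-j:ℕ):ℝ) + 1 = α+1+(j:ℝ) := by rw [hcast]; ring
      rw [gbinomR_eq_pochR, harg]
    have hg2 : gbinomR ((n:ℝ)+β) j = pochR (β+1+((n-j:ℕ):ℝ)) j / (Nat.factorial j) := by
      have harg : (n:ℝ)+β - (j:ℝ) + 1 = β+1+((n-j:ℕ):ℝ) := by rw [hcast]; ring
      rw [gbinomR_eq_pochR, harg]
    have fA1 : pochR (α+1) j * pochR (α+1+(j:ℝ)) (n-j) = pochR (α+1) n := by
      rw [← pochR_add]; congr 1; omega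
    have fA2 : pochR (α+1) a * pochR (α+(a:ℝ)+1) (k+j) = pochR (α+1) (j+(a+k)) := by
      have harg : α+(a:ℝ)+1 = (α+1)+(a:ℝ) := by ring
      rw [harg, ← pochR_add]; congr 1; omega
    have fA3 : pochR (α+1) j * pochR (α+1+(j:ℝ)) (a+k) = pochR (α+1) (j+(a+k)) := by
      rw [← pochR_add]
    have fB1 : pochR (β+1) (n-j) * pochR (β+1+((n-j:ℕ):ℝ)) j = pochR (β+1) n := by
      rw [← pochR_add]; congr 1; omega
    have fB2 : pochR (β+1) b * pochR (β+(b:ℝ)+1) (n-j) = pochR (β+1) ((n-j)+b) := by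
      have harg : β+(b:ℝ)+1 = (β+1)+(b:ℝ) := by ring
      rw [harg, ← pochR_add]; congr 1; omega
    have fB3 : pochR (β+1) (n-j) * pochR (β+1+((n-j:ℕ):ℝ)) b = pochR (β+1) ((n-j)+b) := by
      rw [← pochR_add]
    have hpeval : p.eval (j:ℝ) = pochR (α+1+(j:ℝ)) (a+k) * pochR (β+1+((n-j:ℕ):ℝ)) b := by
      rw [hp]
      simp only [Polynomial.eval_mul, Polynomial.eval_prod, Polynomial.eval_add,
        Polynomial.eval_sub, Polynomial.eval_C, Polynomial.eval_X]
      congr 1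
      · unfold pochR
        apply Finset.prod_congr rfl
        intro i _; ring
      · unfold pochR
        apply Finset.prod_congr rfl
        intro i _
        rw [hcast]; ring
    have hfact : ((n.choose j : ℕ):ℝ) * (Nat.factorial j) * (Nat.factorial (n-j))
        = (Nat.factorial n : ℝ) := by
      exact_mod_cast congrArg (Nat.cast : ℕ → ℝ) (Nat.choose_mul_factorial_mul_factorial hj')
    have e1 : pochR (α+1+(j:ℝ)) (n-j) = pochR (α+1) n / pochR (α+1) j := by
      rw [eq_div_iff (hAne j)]; linear_combination fA1
    have e2 : pochR (α+(a:ℝ)+1) (k+j) = pochR (α+1) (j+(a+k)) / pochR (α+1) a := by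
      rw [eq_div_iff (hAne a)]; linear_combination fA2
    have e3 : pochR (α+1+(j:ℝ)) (a+k) = pochR (α+1) (j+(a+k)) / pochR (α+1) j := by
      rw [eq_div_iff (hAne j)]; linear_combination fA3
    have e4 : pochR (β+1+((n-j:ℕ):ℝ)) j = pochR (β+1) n / pochR (β+1) (n-j) := by
      rw [eq_div_iff (hBne (n-j))]; linear_combination fB1
    have e5 : pochR (β+(b:ℝ)+1) (n-j) = pochR (β+1) ((n-j)+b) / pochR (β+1) b := by
      rw [eq_div_iff (hBne b)]; linear_combination fB2
    have e6 : pochR (β+1+((n-j:ℕ):ℝ)) b = pochR (β+1) ((n-j)+b) / pochR (β+1) (n-j) := by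
      rw [eq_div_iff (hBne (n-j))]; linear_combination fB3
    have hfj : (Nat.factorial j : ℝ) ≠ 0 := by positivity
    have hfnj : (Nat.factorial (n-j) : ℝ) ≠ 0 := by positivity
    have hch : ((n.choose j : ℕ):ℝ) ≠ 0 := by
      exact_mod_cast (Nat.choose_pos hj').ne'
    rw [hg1, hg2, hpeval, e1, e2, e4, e5, e3, e6, ← hfact]
    field_simp
  rw [Finset.sum_congr rfl key, ← Finset.mul_sum]
  rw [alt_sum_choose_eval n hn0 p hpdeg, mul_zero]

lemma pochR_one_add (x : ℝ) (m : ℕ) : pochR x (m+1) = x * pochR (x+1) m := by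
  rw [show m + 1 = 1 + m from by omega, pochR_add]
  simp [pochR]

lemma Mom_closed {u v : ℝ} (hu : -1 < u) (hv : -1 < v) :
    ∀ (c d : ℕ), Mom (u+(c:ℝ)) (v+(d:ℝ)) * pochR (v+(d:ℝ)+1) c
      = Mom u (v+((c+d : ℕ):ℝ)) * pochR (u+1) c := by
  intro c
  induction c with
  | zero =>
    intro d
    simp [pochR]
  | succ c ih =>
    intro d
    have hrec := Mom_rec (pe := u + c) (qe := v + d)
      (by have : (0:ℝ) ≤ (c:ℝ) := Nat.cast_nonneg c; linarith)
      (by have : (0:ℝ) ≤ (d:ℝ) := Nat.cast_nonneg d; linarith)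
    have hvd1 : (0:ℝ) < v + d + 1 := by
      have : (0:ℝ) ≤ (d:ℝ) := Nat.cast_nonneg d; linarith
    have e1 : u + ((c+1:ℕ):ℝ) = (u + c) + 1 := by push_cast; ring
    have e2 : v + ((d+1:ℕ):ℝ) = (v + d) + 1 := by push_cast; ring
    have ihd := ih (d+1)
    rw [e2] at ihd
    have eidx : c + (d+1) = (c+1) + d := by omega
    rw [eidx] at ihd
    -- goal
    rw [e1, pochR_one_add (v+d+1) c, pochR_succ (u+1) c]
    have e3 : v + (d:ℝ) + 1 + 1 = (v + d + 1) + 1 := by ring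
    -- LHS = Mom ((u+c)+1) (v+d) * ((v+d+1) * pochR (v+d+2) c)
    have hM : Mom ((u+c)+1) (v+d) * ((v+d+1) * pochR ((v+d+1)+1) c)
        = (u+c+1) * (Mom (u+c) ((v+d)+1) * pochR ((v+d+1)+1) c) := by
      calc Mom ((u+c)+1) (v+d) * ((v+d+1) * pochR ((v+d+1)+1) c)
          = ((v+d+1) * Mom ((u+c)+1) (v+d)) * pochR ((v+d+1)+1) c := by ring
        _ = ((u+c+1) * Mom (u+c) ((v+d)+1)) * pochR ((v+d+1)+1) c := by rw [hrec]
        _ = _ := by ring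
    have e4 : v + (d:ℝ) + 1 + 1 = v + ((d:ℝ)+1) + 1 := by ring
    have e5 : (v+d) + 1 = v + ((d+1:ℕ):ℝ) := by push_cast; ring
    calc Mom ((u+c)+1) (v+d) * ((v+(d:ℝ)+1) * pochR (v+(d:ℝ)+1+1) c)
        = (u+c+1) * (Mom (u+c) ((v+d)+1) * pochR ((v+d+1)+1) c) := hM
      _ = (u+c+1) * (Mom u (v+(((c+1)+d:ℕ):ℝ)) * pochR (u+1) c) := by rw [ihd]
      _ = Mom u (v+(((c+1)+d:ℕ):ℝ)) * (pochR (u+1) c * (u+1+c)) := by ring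

lemma Mom_formula {u v : ℝ} (hu : -1 < u) (hv : -1 < v) (n k j : ℕ) (hj : j ≤ n) :
    Mom (u+((k+j:ℕ):ℝ)) (v+((n-j:ℕ):ℝ)) * pochR (v+1) (n+k)
      = Mom u (v+((n+k:ℕ):ℝ)) * (pochR (u+1) (k+j) * pochR (v+1) (n-j)) := by
  have hcf := Mom_closed hu hv (k+j) (n-j)
  have hidx : (k+j) + (n-j) = n+k := by omega
  rw [hidx] at hcf
  have hpoch : pochR (v+1) (n-j) * pochR ((v+1)+((n-j:ℕ):ℝ)) (k+j) = pochR (v+1) (n+k) := by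
    rw [← pochR_add]; congr 1; omega
  have e : (v+1)+((n-j:ℕ):ℝ) = v+((n-j:ℕ):ℝ)+1 := by ring
  calc Mom (u+((k+j:ℕ):ℝ)) (v+((n-j:ℕ):ℝ)) * pochR (v+1) (n+k)
      = Mom (u+((k+j:ℕ):ℝ)) (v+((n-j:ℕ):ℝ))
          * (pochR (v+1) (n-j) * pochR ((v+1)+((n-j:ℕ):ℝ)) (k+j)) := by rw [hpoch]
    _ = (Mom (u+((k+j:ℕ):ℝ)) (v+((n-j:ℕ):ℝ)) * pochR (v+((n-j:ℕ):ℝ)+1) (k+j))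
          * pochR (v+1) (n-j) := by rw [e]; ring
    _ = (Mom u (v+((n+k:ℕ):ℝ)) * pochR (u+1) (k+j)) * pochR (v+1) (n-j) := by rw [hcf]
    _ = _ := by ring

set_option maxHeartbeats 1000000 in
lemma qo_basis (n a b k : ℕ) (α β : ℝ) (hα : ∀ m : ℤ, α ≠ m) (hβ : ∀ m : ℤ, β ≠ m)
    (hu : -1 < α + a) (hv : -1 < β + b) (hk : a+b+k+1 ≤ n) :
    ∫ t in Set.Ioo (-1:ℝ) 1, ((1 - Polynomial.X)^k * jacobiR n α β).eval t *
      ((1-t)^(α+(a:ℝ)) * (1+t)^(β+(b:ℝ))) = 0 := by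
  have hwpos : ∀ (c : ℕ), -1 < α + (a:ℝ) + (c:ℕ) := fun c => by
    have : (0:ℝ) ≤ (c:ℝ) := Nat.cast_nonneg c; linarith
  have hwpos' : ∀ (c : ℕ), -1 < β + (b:ℝ) + (c:ℕ) := fun c => by
    have : (0:ℝ) ≤ (c:ℝ) := Nat.cast_nonneg c; linarith
  have point : ∀ t ∈ Set.Ioo (-1:ℝ) 1,
      ((1 - Polynomial.X)^k * jacobiR n α β).eval t * ((1-t)^(α+(a:ℝ)) * (1+t)^(β+(b:ℝ)))
      = ∑ j ∈ range (n+1),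
          ((2:ℝ)⁻¹^n * (gbinomR ((n:ℝ)+α) (n-j) * gbinomR ((n:ℝ)+β) j) * (-1)^j)
          * ((1-t)^(α+(a:ℝ)+((k+j:ℕ):ℝ)) * (1+t)^(β+(b:ℝ)+((n-j:ℕ):ℝ))) := by
    intro t ht
    have h1t : (0:ℝ) < 1 - t := by linarith [ht.2]
    have h2t : (0:ℝ) < 1 + t := by linarith [ht.1]
    rw [Polynomial.eval_mul, Polynomial.eval_pow, Polynomial.eval_sub, Polynomial.eval_one,
      Polynomial.eval_X]
    unfold jacobiR
    rw [Polynomial.eval_smul, Polynomial.eval_finset_sum, smul_eq_mul, Finset.mul_sum,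
      Finset.mul_sum, Finset.sum_mul]
    apply Finset.sum_congr rfl
    intro j hj
    rw [Finset.mem_range] at hj
    rw [Polynomial.eval_mul, Polynomial.eval_mul, Polynomial.eval_pow, Polynomial.eval_pow,
      Polynomial.eval_sub, Polynomial.eval_add, Polynomial.eval_one, Polynomial.eval_X,
      Polynomial.eval_C]
    have ht1 : (t-1:ℝ)^j = (-1:ℝ)^j * (1-t)^j := by
      rw [show (t-1:ℝ) = -(1-t) from by ring, neg_pow]
    have ht2 : (t+1:ℝ)^(n-j) = (1+t)^(n-j) := by rw [show (t+1:ℝ) = 1+t from by ring]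
    have e1 : (1-t:ℝ)^(α+(a:ℝ)+((k+j:ℕ):ℝ)) = ((1-t)^(α+(a:ℝ)) * (1-t)^(k:ℕ)) * (1-t)^(j:ℕ) := by
      rw [Real.rpow_add h1t, Real.rpow_natCast, pow_add]; ring
    have e2 : (1+t:ℝ)^(β+(b:ℝ)+((n-j:ℕ):ℝ)) = (1+t)^(β+(b:ℝ)) * (1+t)^(n-j:ℕ) := by
      rw [Real.rpow_add h2t, Real.rpow_natCast]
    rw [ht1, ht2, e1, e2]
    ring
  rw [MeasureTheory.setIntegral_congr_fun measurableSet_Ioo point]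
  rw [MeasureTheory.integral_finset_sum]
  swap
  · intro j hj
    exact (integrableOn_weight (hwpos (k+j)) (hwpos' (n-j))).const_mul _
  have hvpos : (0:ℝ) < pochR (β+(b:ℝ)+1) (n+k) := pochR_pos (by linarith) _
  have termeq : ∀ j ∈ range (n+1),
      ∫ t in Set.Ioo (-1:ℝ) 1,
        ((2:ℝ)⁻¹^n * (gbinomR ((n:ℝ)+α) (n-j) * gbinomR ((n:ℝ)+β) j) * (-1)^j)
          * ((1-t)^(α+(a:ℝ)+((k+j:ℕ):ℝ)) * (1+t)^(β+(b:ℝ)+((n-j:ℕ):ℝ)))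
      = ((2:ℝ)⁻¹^n * Mom (α+(a:ℝ)) (β+(b:ℝ)+((n+k:ℕ):ℝ)) / pochR (β+(b:ℝ)+1) (n+k))
        * (gbinomR ((n:ℝ)+α) (n-j) * gbinomR ((n:ℝ)+β) j * (-1:ℝ)^j *
            pochR (α+(a:ℝ)+1) (k+j) * pochR (β+(b:ℝ)+1) (n-j)) := by
    intro j hj
    rw [Finset.mem_range] at hj
    rw [MeasureTheory.integral_const_mul]
    have hMom : (∫ t in Set.Ioo (-1:ℝ) 1,
        (1-t)^(α+(a:ℝ)+((k+j:ℕ):ℝ)) * (1+t)^(β+(b:ℝ)+((n-j:ℕ):ℝ)))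
        = Mom (α+(a:ℝ)+((k+j:ℕ):ℝ)) (β+(b:ℝ)+((n-j:ℕ):ℝ)) := rfl
    rw [hMom]
    have hform := Mom_formula hu hv n k j (by omega)
    have : Mom (α+(a:ℝ)+((k+j:ℕ):ℝ)) (β+(b:ℝ)+((n-j:ℕ):ℝ))
        = Mom (α+(a:ℝ)) (β+(b:ℝ)+((n+k:ℕ):ℝ))
          * (pochR (α+(a:ℝ)+1) (k+j) * pochR (β+(b:ℝ)+1) (n-j)) / pochR (β+(b:ℝ)+1) (n+k) := by
      rw [eq_div_iff hvpos.ne']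
      exact hform
    rw [this]
    ring
  rw [Finset.sum_congr rfl termeq, ← Finset.mul_sum,
    sum_identity n a b k α β hα hβ hk, mul_zero]

lemma qo (n a b : ℕ) (α β : ℝ) (hα : ∀ m : ℤ, α ≠ m) (hβ : ∀ m : ℤ, β ≠ m)
    (hu : -1 < α + a) (hv : -1 < β + b) (q : Polynomial ℝ)
    (hq : q.natDegree + 1 + a + b ≤ n) :
    ∫ t in Set.Ioo (-1:ℝ) 1, (q * jacobiR n α β).eval t *
      ((1-t)^(α+(a:ℝ)) * (1+t)^(β+(b:ℝ))) = 0 := by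
  set r : Polynomial ℝ := q.comp (1 - Polynomial.X) with hr
  have hdeg1X : (1 - Polynomial.X : Polynomial ℝ).natDegree = 1 := by
    have : (1 - Polynomial.X : Polynomial ℝ) = -(Polynomial.X - Polynomial.C 1) := by
      rw [Polynomial.C_1]; ring
    rw [this, Polynomial.natDegree_neg, Polynomial.natDegree_X_sub_C]
  have hrd : r.natDegree ≤ q.natDegree := by
    rw [hr, Polynomial.natDegree_comp, hdeg1X, mul_one]
  have hqr : q = ∑ i ∈ range (q.natDegree + 1),
      Polynomial.C (r.coeff i) * (1 - Polynomial.X)^i := by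
    have hcomp : (1 - Polynomial.X : Polynomial ℝ).comp (1 - Polynomial.X) = Polynomial.X := by
      simp [Polynomial.sub_comp, Polynomial.one_comp, Polynomial.X_comp]
    have h1 : q = r.comp (1 - Polynomial.X) := by
      rw [hr, Polynomial.comp_assoc, hcomp, Polynomial.comp_X]
    conv_lhs => rw [h1, Polynomial.as_sum_range' r (q.natDegree+1) (by omega)]
    rw [show ((∑ i ∈ range (q.natDegree + 1), Polynomial.monomial i (r.coeff i)).comp
        (1 - Polynomial.X)) = ∑ i ∈ range (q.natDegree + 1),
          ((Polynomial.monomial i (r.coeff i)).comp (1 - Polynomial.X)) from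
      map_sum (Polynomial.compRingHom (1 - Polynomial.X)) _ _]
    apply Finset.sum_congr rfl
    intro i _
    rw [← Polynomial.C_mul_X_pow_eq_monomial, Polynomial.mul_comp, Polynomial.C_comp,
      Polynomial.pow_comp, Polynomial.X_comp]
  have point : ∀ t : ℝ, (q * jacobiR n α β).eval t * ((1-t)^(α+(a:ℝ)) * (1+t)^(β+(b:ℝ)))
      = ∑ i ∈ range (q.natDegree + 1), r.coeff i *
          (((1 - Polynomial.X)^i * jacobiR n α β).eval t *
            ((1-t)^(α+(a:ℝ)) * (1+t)^(β+(b:ℝ)))) := by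
    intro t
    conv_lhs => rw [hqr]
    rw [Finset.sum_mul, Polynomial.eval_finset_sum, Finset.sum_mul]
    apply Finset.sum_congr rfl
    intro i _
    simp only [Polynomial.eval_mul, Polynomial.eval_C]
    ring
  rw [MeasureTheory.setIntegral_congr_fun measurableSet_Ioo (fun t _ => point t)]
  rw [MeasureTheory.integral_finset_sum]
  swap
  · intro i _
    exact (integrableOn_poly_weight hu hv _).const_mul _
  apply Finset.sum_eq_zero
  intro i hi
  rw [Finset.mem_range] at hi
  rw [MeasureTheory.integral_const_mul,
    qo_basis n a b i α β hα hβ hu hv (by omega), mul_zero]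

lemma jacobi_eval_one (n : ℕ) (α β : ℝ) :
    (jacobiR n α β).eval 1 = gbinomR ((n:ℝ)+α) n := by
  unfold jacobiR
  rw [Polynomial.eval_smul, Polynomial.eval_finset_sum, smul_eq_mul]
  rw [Finset.sum_eq_single 0]
  · simp only [Nat.sub_zero, pow_zero, mul_one, Polynomial.eval_mul, Polynomial.eval_pow,
      Polynomial.eval_add, Polynomial.eval_one, Polynomial.eval_X, Polynomial.eval_C]
    have hg0 : gbinomR ((n:ℝ)+β) 0 = 1 := by simp [gbinomR]
    rw [hg0, mul_one]
    have : (1:ℝ) + 1 = 2 := by norm_num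
    rw [this]
    rw [← mul_assoc, mul_comm ((2:ℝ)⁻¹^n), mul_assoc, ← mul_pow]
    norm_num
  · intro j hj hj0
    simp only [Polynomial.eval_mul, Polynomial.eval_pow, Polynomial.eval_sub,
      Polynomial.eval_one, Polynomial.eval_X]
    rw [sub_self, zero_pow hj0]
    ring
  · intro h
    exact absurd (Finset.mem_range.2 (by omega)) h

lemma jacobi_ne_zero (n : ℕ) (α β : ℝ) (hα : ∀ m : ℤ, α ≠ m) : jacobiR n α β ≠ 0 := by
  intro h
  have h1 : (jacobiR n α β).eval 1 = 0 := by rw [h]; simp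
  rw [jacobi_eval_one] at h1
  unfold gbinomR at h1
  rcases div_eq_zero_iff.1 h1 with h2 | h2
  · rcases Finset.prod_eq_zero_iff.1 h2 with ⟨i, _, h3⟩
    exact hα ((i:ℤ) - n) (by push_cast; linarith)
  · have : (0:ℝ) < Nat.factorial n := by positivity
    rw [h2] at this; norm_num at this

lemma no_sign_change : ∀ (N : ℕ) (f : Polynomial ℝ), f.natDegree ≤ N → f ≠ 0 →
    (∀ z ∈ Set.Ioo (-1:ℝ) 1, f.IsRoot z → Even (f.rootMultiplicity z)) →
    (∀ x ∈ Set.Ioo (-1:ℝ) 1, 0 ≤ f.eval x) ∨ (∀ x ∈ Set.Ioo (-1:ℝ) 1, f.eval x ≤ 0) := by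
  intro N
  induction N using Nat.strong_induction_on with
  | _ N ih =>
  intro f hdeg hf0 hroots
  by_contra hcon
  push_neg at hcon
  obtain ⟨⟨x, hx, hxneg⟩, ⟨y, hy, hypos⟩⟩ := hcon
  have hxy_ne : x ≠ y := by
    intro h; rw [h] at hxneg; linarith
  obtain ⟨z, hzmem, hz⟩ : ∃ z ∈ Set.Ioo (min x y) (max x y), f.eval z = 0 := by
    rcases lt_or_gt_of_ne hxy_ne with hxy | hxy
    · have hsub := intermediate_value_Ioo (le_of_lt hxy)
        (f.continuous_aeval.continuousOn : ContinuousOn (fun t => f.eval t) (Set.Icc x y))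
      obtain ⟨z, hz1, hz2⟩ := hsub (show (0:ℝ) ∈ Set.Ioo (f.eval x) (f.eval y) from ⟨hxneg, hypos⟩)
      exact ⟨z, by rw [min_eq_left hxy.le, max_eq_right hxy.le]; exact hz1, hz2⟩
    · have hsub := intermediate_value_Ioo' (le_of_lt hxy)
        (f.continuous_aeval.continuousOn : ContinuousOn (fun t => f.eval t) (Set.Icc y x))
      obtain ⟨z, hz1, hz2⟩ := hsub (show (0:ℝ) ∈ Set.Ioo (f.eval x) (f.eval y) from ⟨hxneg, hypos⟩)
      exact ⟨z, by rw [min_eq_right hxy.le, max_eq_left hxy.le]; exact hz1, hz2⟩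
  have hzI : z ∈ Set.Ioo (-1:ℝ) 1 :=
    ⟨lt_trans (lt_min hx.1 hy.1) hzmem.1, lt_trans hzmem.2 (max_lt hx.2 hy.2)⟩
  have hzx : x ≠ z := by intro h; rw [← h] at hz; linarith
  have hzy : y ≠ z := by intro h; rw [← h] at hz; linarith
  have hmeven : Even (f.rootMultiplicity z) := hroots z hzI hz
  have hm1 : 0 < f.rootMultiplicity z := (Polynomial.rootMultiplicity_pos hf0).2 hz
  obtain ⟨g, hfg, hgnd⟩ := f.exists_eq_pow_rootMultiplicity_mul_and_not_dvd hf0 z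
  have hgz : ¬ g.IsRoot z := fun h => hgnd (Polynomial.dvd_iff_isRoot.2 h)
  have hg0 : g ≠ 0 := fun h => hf0 (by rw [hfg, h, mul_zero])
  have hnd : f.natDegree = f.rootMultiplicity z + g.natDegree := by
    conv_lhs => rw [hfg]
    rw [Polynomial.natDegree_mul (pow_ne_zero _ (Polynomial.X_sub_C_ne_zero z)) hg0,
      Polynomial.natDegree_pow, Polynomial.natDegree_X_sub_C, mul_one]
  have hevalx : f.eval x = (x - z)^(f.rootMultiplicity z) * g.eval x := by
    conv_lhs => rw [hfg]
    simp [Polynomial.eval_mul, Polynomial.eval_pow]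
  have hevaly : f.eval y = (y - z)^(f.rootMultiplicity z) * g.eval y := by
    conv_lhs => rw [hfg]
    simp [Polynomial.eval_mul, Polynomial.eval_pow]
  have hpx : 0 < (x - z)^(f.rootMultiplicity z) :=
    hmeven.pow_pos (sub_ne_zero.2 hzx)
  have hpy : 0 < (y - z)^(f.rootMultiplicity z) :=
    hmeven.pow_pos (sub_ne_zero.2 hzy)
  have hgx : g.eval x < 0 := by nlinarith
  have hgy : 0 < g.eval y := by nlinarith
  have hgroots : ∀ w ∈ Set.Ioo (-1:ℝ) 1, g.IsRoot w → Even (g.rootMultiplicity w) := by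
    intro w hw hwroot
    have hwz : w ≠ z := fun h => hgz (h ▸ hwroot)
    have hfw : f.IsRoot w := by
      rw [hfg]
      simp [Polynomial.IsRoot, Polynomial.eval_mul, hwroot.eq_zero]
    have heven := hroots w hw hfw
    have hzero : ((Polynomial.X - Polynomial.C z)^(f.rootMultiplicity z)).rootMultiplicity w
        = 0 := by
      apply Polynomial.rootMultiplicity_eq_zero
      simp only [Polynomial.IsRoot, Polynomial.eval_pow, Polynomial.eval_sub,
        Polynomial.eval_X, Polynomial.eval_C]
      exact fun h => (pow_ne_zero _ (sub_ne_zero.2 hwz)) h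
    rw [hfg, Polynomial.rootMultiplicity_mul (by rw [← hfg]; exact hf0), hzero, zero_add]
      at heven
    exact heven
  have hN1 : 1 ≤ N := by omega
  rcases ih (N-1) (by omega) g (by omega) hg0 hgroots with h | h
  · linarith [h x hx]
  · linarith [h y hy]

lemma rootMult_prod (s : Finset ℝ) (z : ℝ) :
    ((∏ w ∈ s, (Polynomial.X - Polynomial.C w)) : Polynomial ℝ).rootMultiplicity z
    = if z ∈ s then 1 else 0 := by
  classical
  induction s using Finset.induction with
  | empty =>
    rw [Finset.prod_empty]
    simp only [Finset.notMem_empty, if_false]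
    simpa using Polynomial.rootMultiplicity_C 1 z
  | insert w s hnotmem ih =>
    rw [Finset.prod_insert hnotmem]
    have h1 : (Polynomial.X - Polynomial.C w : Polynomial ℝ) ≠ 0 := Polynomial.X_sub_C_ne_zero w
    have h2 : (∏ v ∈ s, (Polynomial.X - Polynomial.C v) : Polynomial ℝ) ≠ 0 :=
      Finset.prod_ne_zero_iff.2 (fun v _ => Polynomial.X_sub_C_ne_zero v)
    rw [Polynomial.rootMultiplicity_mul (mul_ne_zero h1 h2), ih,
      Polynomial.rootMultiplicity_X_sub_C]
    by_cases hzw : z = w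
    · subst hzw
      rw [if_pos rfl, if_neg hnotmem, if_pos (Finset.mem_insert_self z s)]
    · rw [if_neg hzw, zero_add]
      by_cases hzs : z ∈ s
      · rw [if_pos hzs, if_pos (Finset.mem_insert_of_mem hzs)]
      · rw [if_neg hzs, if_neg (by simp [Finset.mem_insert, hzw, hzs])]

/-- For `-n < α < -1`, `-n < β < -1`, `α + β + n > -1`, and `α, β, α+β ∉ ℤ`, the Jacobi
polynomial `P_n^{(α,β)}` has at least `n - ⌊-α⌋ - ⌊-β⌋` distinct zeros in `(-1, 1)`. -/
theorem jacobi_zeros_multiple_orthogonality (n : ℕ) (α β : ℝ)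
    (hα1 : -(n : ℝ) < α) (hα2 : α < -1) (hβ1 : -(n : ℝ) < β) (hβ2 : β < -1)
    (hsum : -1 < α + β + n)
    (hαZ : ¬∃ m : ℤ, α = m) (hβZ : ¬∃ m : ℤ, β = m) (hαβZ : ¬∃ m : ℤ, α + β = m) :
    ∃ S : Finset ℝ, n - (⌊-α⌋.toNat + ⌊-β⌋.toNat) ≤ S.card ∧
      ↑S ⊆ Set.Ioo (-1:ℝ) 1 ∧ ∀ x ∈ S, (jacobiR n α β).eval x = 0 := by
  classical
  have hα' : ∀ m : ℤ, α ≠ m := fun m hm => hαZ ⟨m, hm⟩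
  have hβ' : ∀ m : ℤ, β ≠ m := fun m hm => hβZ ⟨m, hm⟩
  set a₀ : ℕ := ⌊-α⌋.toNat with ha₀
  set b₀ : ℕ := ⌊-β⌋.toNat with hb₀
  have ha₀nn : (0:ℤ) ≤ ⌊-α⌋ := by
    apply Int.le_floor.2; push_cast; linarith
  have hb₀nn : (0:ℤ) ≤ ⌊-β⌋ := by
    apply Int.le_floor.2; push_cast; linarith
  have ha₀cast : ((a₀:ℕ):ℝ) = ((⌊-α⌋ : ℤ) : ℝ) := by
    rw [ha₀]; exact_mod_cast congrArg (Int.cast : ℤ → ℝ) (Int.toNat_of_nonneg ha₀nn)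
  have hb₀cast : ((b₀:ℕ):ℝ) = ((⌊-β⌋ : ℤ) : ℝ) := by
    rw [hb₀]; exact_mod_cast congrArg (Int.cast : ℤ → ℝ) (Int.toNat_of_nonneg hb₀nn)
  have hu : -1 < α + (a₀:ℝ) := by
    rw [ha₀cast]
    have := Int.sub_one_lt_floor (-α)
    linarith
  have hv : -1 < β + (b₀:ℝ) := by
    rw [hb₀cast]
    have := Int.sub_one_lt_floor (-β)
    linarith
  set P : Polynomial ℝ := jacobiR n α β with hP
  have hP0 : P ≠ 0 := jacobi_ne_zero n α β hα'
  set T : Finset ℝ := P.roots.toFinset.filter (fun z => z ∈ Set.Ioo (-1:ℝ) 1) with hT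
  have hTsub : ∀ z ∈ T, z ∈ Set.Ioo (-1:ℝ) 1 ∧ P.IsRoot z := by
    intro z hz
    rw [hT, Finset.mem_filter, Multiset.mem_toFinset, Polynomial.mem_roots'] at hz
    exact ⟨hz.2, hz.1.2⟩
  refine ⟨T, ?_, fun x hx => (hTsub x (Finset.mem_coe.1 hx)).1, fun x hx => (hTsub x hx).2⟩
  by_contra hlt
  push_neg at hlt
  have hcard : T.card + 1 + a₀ + b₀ ≤ n := by omega
  set T₁ : Finset ℝ := T.filter (fun z => ¬ Even (P.rootMultiplicity z)) with hT₁
  have hT₁card : T₁.card ≤ T.card := Finset.card_filter_le _ _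
  set q : Polynomial ℝ := ∏ z ∈ T₁, (Polynomial.X - Polynomial.C z) with hq
  have hq0 : q ≠ 0 := Finset.prod_ne_zero_iff.2 (fun v _ => Polynomial.X_sub_C_ne_zero v)
  have hqdeg : q.natDegree = T₁.card := by
    rw [hq, Polynomial.natDegree_prod _ _ (fun v _ => Polynomial.X_sub_C_ne_zero v)]
    simp [Polynomial.natDegree_X_sub_C]
  have hfroots : ∀ z ∈ Set.Ioo (-1:ℝ) 1, (P * q).IsRoot z →
      Even ((P * q).rootMultiplicity z) := by
    intro z hz hroot
    have hPz : P.IsRoot z := by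
      have hev : P.eval z = 0 ∨ q.eval z = 0 := by
        simpa [Polynomial.eval_mul] using hroot.eq_zero
      rcases hev with h | h
      · exact h
      · rw [hq, Polynomial.eval_prod] at h
        obtain ⟨w, hw, hw0⟩ := Finset.prod_eq_zero_iff.1 h
        have hzw : z = w := by
          simpa [sub_eq_zero] using hw0
        subst hzw
        exact (hTsub z (Finset.mem_filter.1 hw).1).2
    have hzT : z ∈ T := by
      rw [hT, Finset.mem_filter, Multiset.mem_toFinset, Polynomial.mem_roots']
      exact ⟨⟨hP0, hPz⟩, hz⟩
    have hmul : (P * q).rootMultiplicity z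
        = P.rootMultiplicity z + q.rootMultiplicity z :=
      Polynomial.rootMultiplicity_mul (mul_ne_zero hP0 hq0)
    have hqm : q.rootMultiplicity z = if z ∈ T₁ then 1 else 0 := by
      rw [hq]; exact rootMult_prod T₁ z
    by_cases he : Even (P.rootMultiplicity z)
    · have hnot : z ∉ T₁ := fun hmem => (Finset.mem_filter.1 hmem).2 he
      rw [hmul, hqm, if_neg hnot, add_zero]
      exact he
    · have hmem : z ∈ T₁ := Finset.mem_filter.2 ⟨hzT, he⟩
      rw [hmul, hqm, if_pos hmem]
      exact (Nat.not_even_iff_odd.1 he).add_one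
  have contra : ∀ q₂ : Polynomial ℝ, q₂ ≠ 0 → q₂.natDegree = T₁.card →
      (∀ x ∈ Set.Ioo (-1:ℝ) 1, 0 ≤ (q₂ * P).eval x) → False := by
    intro q₂ hq₂0 hq₂d hnn
    have hint : ∫ t in Set.Ioo (-1:ℝ) 1, (q₂ * P).eval t *
        ((1-t)^(α+(a₀:ℝ)) * (1+t)^(β+(b₀:ℝ))) = 0 :=
      qo n a₀ b₀ α β hα' hβ' hu hv q₂ (by omega)
    set F : ℝ → ℝ := fun t => (q₂ * P).eval t * ((1-t)^(α+(a₀:ℝ)) * (1+t)^(β+(b₀:ℝ))) with hF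
    have hFint : IntegrableOn F (Set.Ioo (-1:ℝ) 1) := integrableOn_poly_weight hu hv _
    have hFnn : 0 ≤ᵐ[volume.restrict (Set.Ioo (-1:ℝ) 1)] F := by
      filter_upwards [MeasureTheory.ae_restrict_mem measurableSet_Ioo] with t ht
      have h1t : (0:ℝ) < 1 - t := by linarith [ht.2]
      have h2t : (0:ℝ) < 1 + t := by linarith [ht.1]
      have hW : (0:ℝ) < (1-t)^(α+(a₀:ℝ)) * (1+t)^(β+(b₀:ℝ)) :=
        mul_pos (Real.rpow_pos_of_pos h1t _) (Real.rpow_pos_of_pos h2t _)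
      exact mul_nonneg (hnn t ht) hW.le
    have hzero := (MeasureTheory.integral_eq_zero_iff_of_nonneg_ae hFnn hFint).1 hint
    have hfin : {x : ℝ | (q₂ * P).IsRoot x}.Finite :=
      Polynomial.finite_setOf_isRoot (mul_ne_zero hq₂0 hP0)
    have hμ : volume.restrict (Set.Ioo (-1:ℝ) 1) ≠ 0 := by
      intro h
      have h2 : volume (Set.Ioo (-1:ℝ) 1) = 0 := by
        rw [← Measure.restrict_apply_univ, h]; simp
      rw [Real.volume_Ioo] at h2
      rw [ENNReal.ofReal_eq_zero] at h2
      norm_num at h2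
    haveI := MeasureTheory.ae_neBot.2 hμ
    have h2 : ∀ᵐ t ∂(volume.restrict (Set.Ioo (-1:ℝ) 1)), t ∈ Set.Ioo (-1:ℝ) 1 :=
      MeasureTheory.ae_restrict_mem measurableSet_Ioo
    have h3 : ∀ᵐ t ∂(volume.restrict (Set.Ioo (-1:ℝ) 1)), t ∉ {x : ℝ | (q₂ * P).IsRoot x} := by
      apply MeasureTheory.measure_eq_zero_iff_ae_notMem.1
      apply le_antisymm _ zero_le
      calc (volume.restrict (Set.Ioo (-1:ℝ) 1)) {x : ℝ | (q₂ * P).IsRoot x}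
          ≤ volume {x : ℝ | (q₂ * P).IsRoot x} := Measure.restrict_le_self _
        _ = 0 := hfin.measure_zero volume
    obtain ⟨t, ht0, htmem, htnr⟩ := (hzero.and (h2.and h3)).exists
    have h1t : (0:ℝ) < 1 - t := by linarith [htmem.2]
    have h2t : (0:ℝ) < 1 + t := by linarith [htmem.1]
    have hW : (0:ℝ) < (1-t)^(α+(a₀:ℝ)) * (1+t)^(β+(b₀:ℝ)) :=
      mul_pos (Real.rpow_pos_of_pos h1t _) (Real.rpow_pos_of_pos h2t _)
    have hFt : (q₂ * P).eval t * ((1-t)^(α+(a₀:ℝ)) * (1+t)^(β+(b₀:ℝ))) = 0 := ht0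
    have hev : (q₂ * P).eval t = 0 := by
      rcases mul_eq_zero.1 hFt with h | h
      · exact h
      · exact absurd h hW.ne'
    exact htnr hev
  rcases no_sign_change (P * q).natDegree (P * q) le_rfl (mul_ne_zero hP0 hq0) hfroots
    with hpos | hneg
  · exact contra q hq0 hqdeg (fun x hx => by
      rw [mul_comm]
      exact hpos x hx)
  · apply contra (-q) (neg_ne_zero.2 hq0) (by rw [Polynomial.natDegree_neg]; exact hqdeg)
    intro x hx
    have := hneg x hx
    have he : ((-q) * P).eval x = -((P * q).eval x) := by
      simp [Polynomial.eval_mul]; ring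
    rw [he]
    linarith
end
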